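/- arXiv:math/0603467 — 6 statements merged into one kernel-verified Lean document; each statement's English description precedes it below -/
import Mathlib

section
/- Let A be an element of SL₂(ℤ) with |Tr(A)| > 2, and let T = [[1,1],[0,1]] and B = [[1,0],[1,1]] in SL₂(ℤ). Then there exist a sign ε ∈ {1, −1}, an integer n ≥ 1, and positive integers a₁, b₁, a₂, b₂, …, aₙ, bₙ such that ε·A is conjugate in SL₂(ℤ) to the product T^{a₁}·B^{b₁}·T^{a₂}·B^{b₂}·⋯·T^{aₙ}·B^{bₙ}. -/
/-- The matrix `T = [[1,1],[0,1]]` in `SL₂(ℤ)`. -/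
noncomputable def Tmat : Matrix.SpecialLinearGroup (Fin 2) ℤ :=
  ⟨!![1, 1; 0, 1], by norm_num [Matrix.det_fin_two_of]⟩

/-- The matrix `B = [[1,0],[1,1]]` in `SL₂(ℤ)`. -/
noncomputable def Bmat : Matrix.SpecialLinearGroup (Fin 2) ℤ :=
  ⟨!![1, 0; 1, 1], by norm_num [Matrix.det_fin_two_of]⟩

/-!
Replacing `A` by `-A` we may assume `tr A ≥ 3`. Write `A = [[a, b], [c, d]]`. While `b` and `c`
have opposite signs, conjugating by `T` or `B` (after normalising `a < d` by `S` and `b < 0` by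
inversion) either strictly decreases `|b| + |c|` or makes `b` and `c` of the same sign, because
`(d - a)² = tr² - 4 - 4bc` is large compared with `|bc|`. So `A` is conjugate to a matrix with
`bc > 0`, and then (conjugating by `S` if `b, c < 0`) to one with positive entries.

A matrix `X ∈ SL₂(ℤ)` with nonnegative entries is a word in `T` and `B`: comparing its rows, one
of `T⁻¹X`, `B⁻¹X` again has nonnegative entries and smaller entry sum. When both off-diagonal
entries are nonzero the word contains both letters, so a cyclic rotation of it, i.e. a conjugate,
starts with `T` and ends with `B`, and its maximal blocks of equal letters give the product
`T^{a₁} B^{b₁} ⋯ T^{aₙ} B^{bₙ}`.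
-/

theorem IsConj.inv {G : Type*} [Group G] {g h : G} (hgh : IsConj g h) : IsConj g⁻¹ h⁻¹ := by
  obtain ⟨c, rfl⟩ := isConj_iff.mp hgh
  exact isConj_iff.mpr ⟨c, by group⟩

open MatrixGroups Matrix

namespace LRDecomposition

@[simp] lemma coe_Tmat : (Tmat : Matrix (Fin 2) (Fin 2) ℤ) = !![1, 1; 0, 1] := rfl

@[simp] lemma coe_Bmat : (Bmat : Matrix (Fin 2) (Fin 2) ℤ) = !![1, 0; 1, 1] := rfl

lemma det_fin_two_eq_one (M : SL(2, ℤ)) : M 0 0 * M 1 1 - M 0 1 * M 1 0 = 1 := by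
  rw [← det_fin_two]
  exact M.2

section Hyperbolic

variable {M N : SL(2, ℤ)}

lemma trace_eq_of_isConj (h : IsConj M N) : N 0 0 + N 1 1 = M 0 0 + M 1 1 := by
  obtain ⟨P, rfl⟩ := isConj_iff.mp h
  have := trace_mul_cycle (P : Matrix (Fin 2) (Fin 2) ℤ) M (adjugate P)
  rw [adjugate_mul, P.2, one_smul, Matrix.one_mul] at this
  simpa [trace_fin_two] using this

lemma offDiag_mul_ne_zero (ht : 3 ≤ M 0 0 + M 1 1) : M 0 1 * M 1 0 ≠ 0 := by
  intro h
  have had : M 0 0 * M 1 1 = 1 := by linarith [det_fin_two_eq_one M]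
  rcases Int.eq_one_or_neg_one_of_mul_eq_one' had with ⟨h1, h2⟩ | ⟨h1, h2⟩ <;> omega

lemma entries_pos_of_offDiag_pos (ht : 3 ≤ M 0 0 + M 1 1) (hb : 0 < M 0 1) (hc : 0 < M 1 0) :
    ∀ i j, 0 < M i j := by
  have had : 0 < M 0 0 * M 1 1 := by nlinarith [det_fin_two_eq_one M]
  have ha : 0 < M 0 0 := by nlinarith
  have hd : 0 < M 1 1 := by nlinarith
  intro i j
  fin_cases i <;> fin_cases j <;> assumption

lemma exists_isConj_offDiag_pos_of_mul_pos (h : 0 < M 0 1 * M 1 0) :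
    ∃ N, IsConj M N ∧ 0 < N 0 1 ∧ 0 < N 1 0 := by
  rcases pos_and_pos_or_neg_and_neg_of_mul_pos h with ⟨hb, hc⟩ | ⟨hb, hc⟩
  · exact ⟨M, .refl M, hb, hc⟩
  · refine ⟨ModularGroup.S * M * ModularGroup.S⁻¹, isConj_iff.mpr ⟨_, rfl⟩, ?_, ?_⟩ <;>
      simpa [ModularGroup.coe_S, Matrix.mul_apply, Matrix.vecMul, dotProduct, Fin.sum_univ_two]

def offDiagSize (M : SL(2, ℤ)) : ℕ := (M 0 1).natAbs + (M 1 0).natAbs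

lemma exists_isConj_descent_of_neg_of_pos_of_lt (ht : 3 ≤ M 0 0 + M 1 1) (hb : M 0 1 < 0)
    (hc : 0 < M 1 0) (hs : M 0 0 < M 1 1) :
    ∃ N, IsConj M N ∧ (0 < N 0 1 * N 1 0 ∨ offDiagSize N < offDiagSize M) := by
  have hdisc : (M 1 1 - M 0 0) ^ 2 = (M 0 0 + M 1 1) ^ 2 - 4 - 4 * (M 0 1 * M 1 0) := by
    linear_combination -4 * det_fin_two_eq_one M
  by_cases hsb : M 1 1 - M 0 0 ≤ -M 0 1
  · -- `(d - a)² ≥ 5 + 4|b|c ≥ 5 + 4(d - a)c`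
    have hsc : 4 * M 1 0 < M 1 1 - M 0 0 := by nlinarith
    refine ⟨Tmat * M * Tmat⁻¹, isConj_iff.mpr ⟨_, rfl⟩, Or.inr ?_⟩
    have hb' : (Tmat * M * Tmat⁻¹) 0 1 = M 0 1 + (M 1 1 - M 0 0) - M 1 0 := by
      simp [Matrix.mul_apply, Matrix.vecMul, dotProduct, Fin.sum_univ_two]
      ring
    have hc' : (Tmat * M * Tmat⁻¹) 1 0 = M 1 0 := by
      simp [Matrix.mul_apply, Matrix.vecMul, dotProduct, Fin.sum_univ_two]
    simp only [offDiagSize, hb', hc']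
    omega
  · set N := Bmat * M * Bmat⁻¹
    have hMN : IsConj M N := isConj_iff.mpr ⟨_, rfl⟩
    have hb' : N 0 1 = M 0 1 := by
      simp [N, Matrix.mul_apply, Matrix.vecMul, dotProduct, Fin.sum_univ_two]
    have hc' : N 1 0 = M 1 0 - (M 1 1 - M 0 0) - M 0 1 := by
      simp [N, Matrix.mul_apply, Matrix.vecMul, dotProduct, Fin.sum_univ_two]
      ring
    have hc'0 : N 1 0 ≠ 0 :=
      right_ne_zero_of_mul <| offDiag_mul_ne_zero ((trace_eq_of_isConj hMN).symm ▸ ht)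
    refine ⟨N, hMN, ?_⟩
    rcases hc'0.lt_or_gt with hneg | hpos
    · exact Or.inl (mul_pos_of_neg_of_neg (hb' ▸ hb) hneg)
    · right
      simp only [offDiagSize, hb', hc']
      omega

lemma exists_isConj_descent_of_neg_of_pos (ht : 3 ≤ M 0 0 + M 1 1) (hb : M 0 1 < 0)
    (hc : 0 < M 1 0) :
    ∃ N, IsConj M N ∧ (0 < N 0 1 * N 1 0 ∨ offDiagSize N < offDiagSize M) := by
  rcases lt_trichotomy (M 0 0) (M 1 1) with hs | hs | hs
  · exact exists_isConj_descent_of_neg_of_pos_of_lt ht hb hc hs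
  · nlinarith [det_fin_two_eq_one M]
  · set M' := ModularGroup.S * M * ModularGroup.S⁻¹
    obtain ⟨h00, h01, h10, h11⟩ :
        M' 0 0 = M 1 1 ∧ M' 0 1 = -M 1 0 ∧ M' 1 0 = -M 0 1 ∧ M' 1 1 = M 0 0 := by
      refine ⟨?_, ?_, ?_, ?_⟩ <;>
        simp [M', ModularGroup.coe_S, Matrix.mul_apply, Matrix.vecMul, dotProduct,
          Fin.sum_univ_two]
    obtain ⟨N, hM'N, hN⟩ := exists_isConj_descent_of_neg_of_pos_of_lt (M := M')
      (by omega) (by omega) (by omega) (by omega)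
    refine ⟨N, (isConj_iff.mpr ⟨_, rfl⟩).trans hM'N, ?_⟩
    simp only [offDiagSize, h01, h10] at hN ⊢
    omega

lemma inv_apply_offDiag (M : SL(2, ℤ)) : M⁻¹ 0 1 = -M 0 1 ∧ M⁻¹ 1 0 = -M 1 0 := by
  simp [adjugate_fin_two]

lemma exists_isConj_descent (ht : 3 ≤ M 0 0 + M 1 1) (hmix : M 0 1 * M 1 0 < 0) :
    ∃ N, IsConj M N ∧ (0 < N 0 1 * N 1 0 ∨ offDiagSize N < offDiagSize M) := by
  rcases mul_neg_iff.mp hmix with ⟨hb, hc⟩ | ⟨hb, hc⟩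
  · obtain ⟨h01, h10⟩ := inv_apply_offDiag M
    obtain ⟨N, hM'N, hN⟩ := exists_isConj_descent_of_neg_of_pos (M := M⁻¹)
      (by simp [adjugate_fin_two]; linarith) (by omega) (by omega)
    obtain ⟨h01', h10'⟩ := inv_apply_offDiag N
    refine ⟨N⁻¹, by simpa using hM'N.inv, ?_⟩
    simpa only [offDiagSize, h01, h10, h01', h10', neg_mul_neg, Int.natAbs_neg] using hN
  · exact exists_isConj_descent_of_neg_of_pos ht hb hc

lemma exists_isConj_offDiag_mul_pos (ht : 3 ≤ M 0 0 + M 1 1) :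
    ∃ N, IsConj M N ∧ 0 < N 0 1 * N 1 0 := by
  induction h : offDiagSize M using Nat.strong_induction_on generalizing M with
  | _ n ih =>
  rcases lt_trichotomy (M 0 1 * M 1 0) 0 with hmix | h0 | hpos
  · obtain ⟨N, hMN, hN | hN⟩ := exists_isConj_descent ht hmix
    · exact ⟨N, hMN, hN⟩
    · obtain ⟨N', hNN', hN'⟩ := ih _ (h ▸ hN) ((trace_eq_of_isConj hMN).symm ▸ ht) rfl
      exact ⟨N', hMN.trans hNN', hN'⟩
  · exact absurd h0 (offDiag_mul_ne_zero ht)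
  · exact ⟨M, .refl M, hpos⟩

theorem exists_isConj_entries_pos (ht : 3 ≤ M 0 0 + M 1 1) :
    ∃ N, IsConj M N ∧ ∀ i j, 0 < N i j := by
  obtain ⟨N₁, hMN₁, hN₁⟩ := exists_isConj_offDiag_mul_pos ht
  obtain ⟨N, hN₁N, hb, hc⟩ := exists_isConj_offDiag_pos_of_mul_pos hN₁
  have hMN := hMN₁.trans hN₁N
  exact ⟨N, hMN, entries_pos_of_offDiag_pos ((trace_eq_of_isConj hMN).symm ▸ ht) hb hc⟩

end Hyperbolic

section Words

variable {X : SL(2, ℤ)}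

def tbMonoid : Submonoid SL(2, ℤ) := Submonoid.closure {Tmat, Bmat}

lemma Tmat_mem_tbMonoid : Tmat ∈ tbMonoid := Submonoid.subset_closure (by simp)

lemma Bmat_mem_tbMonoid : Bmat ∈ tbMonoid := Submonoid.subset_closure (by simp)

lemma eq_one_or_rows_le_of_nonneg (hX : ∀ i j, 0 ≤ X i j) :
    X = 1 ∨ (X 1 0 ≤ X 0 0 ∧ X 1 1 ≤ X 0 1) ∨ (X 0 0 ≤ X 1 0 ∧ X 0 1 ≤ X 1 1) := by
  have hdet := det_fin_two_eq_one X
  have := hX 0 0; have := hX 0 1; have := hX 1 0; have := hX 1 1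
  rcases le_total (X 1 0) (X 0 0) with hca | hac <;>
    rcases le_total (X 1 1) (X 0 1) with hdb | hbd
  · exact Or.inr (Or.inl ⟨hca, hdb⟩)
  · rcases hca.lt_or_eq with hca | hca
    · rcases hbd.lt_or_eq with hbd | hbd
      · left
        have hb : X 0 1 = 0 := by nlinarith
        have hc : X 1 0 = 0 := by nlinarith
        have ha : X 0 0 = 1 := by nlinarith
        have hd : X 1 1 = 1 := by nlinarith
        ext i j
        fin_cases i <;> fin_cases j <;> simp [ha, hb, hc, hd]
      · exact Or.inr (Or.inl ⟨hca.le, hbd.ge⟩)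
    · exact Or.inr (Or.inr ⟨hca.ge, hbd⟩)
  · nlinarith
  · exact Or.inr (Or.inr ⟨hac, hbd⟩)

theorem mem_tbMonoid_of_nonneg (hX : ∀ i j, 0 ≤ X i j) : X ∈ tbMonoid := by
  induction h : (X 0 0 + X 0 1 + X 1 0 + X 1 1).toNat using Nat.strong_induction_on
    generalizing X with
  | _ n ih =>
  have hdet := det_fin_two_eq_one X
  have := hX 0 0; have := hX 0 1; have := hX 1 0; have := hX 1 1
  rcases eq_one_or_rows_le_of_nonneg hX with rfl | ⟨h1, h2⟩ | ⟨h1, h2⟩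
  · exact one_mem _
  · have hY : ∀ i j,
        (Tmat⁻¹ * X) i j = !![X 0 0 - X 1 0, X 0 1 - X 1 1; X 1 0, X 1 1] i j := by
      intro i j
      fin_cases i <;> fin_cases j <;>
        simp [adjugate_fin_two, Matrix.mul_apply, Fin.sum_univ_two] <;> ring
    have hcd : 0 < X 1 0 + X 1 1 := by
      by_contra!
      nlinarith
    have hY_mem := ih _ (by simp [hY]; omega) (X := Tmat⁻¹ * X)
      (fun i j => by fin_cases i <;> fin_cases j <;> simp [hY] <;> omega) rfl
    simpa using mul_mem Tmat_mem_tbMonoid hY_mem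
  · have hY : ∀ i j,
        (Bmat⁻¹ * X) i j = !![X 0 0, X 0 1; X 1 0 - X 0 0, X 1 1 - X 0 1] i j := by
      intro i j
      fin_cases i <;> fin_cases j <;>
        simp [adjugate_fin_two, Matrix.mul_apply, Fin.sum_univ_two] <;> ring
    have hab : 0 < X 0 0 + X 0 1 := by
      by_contra!
      nlinarith
    have hY_mem := ih _ (by simp [hY]; omega) (X := Bmat⁻¹ * X)
      (fun i j => by fin_cases i <;> fin_cases j <;> simp [hY] <;> omega) rfl
    simpa using mul_mem Bmat_mem_tbMonoid hY_mem

lemma eq_one_or_eq_Tmat_mul_or_eq_Bmat_mul (hX : X ∈ tbMonoid) :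
    X = 1 ∨ ∃ Y ∈ tbMonoid, X = Tmat * Y ∨ X = Bmat * Y := by
  induction hX using Submonoid.closure_induction_left with
  | one => exact Or.inl rfl
  | mul_left x hx Y hY _ =>
    rcases hx with rfl | rfl
    exacts [Or.inr ⟨Y, hY, Or.inl rfl⟩, Or.inr ⟨Y, hY, Or.inr rfl⟩]

lemma exists_eq_mul_Tmat_mul (hX : X ∈ tbMonoid) (h01 : X 0 1 ≠ 0) :
    ∃ P ∈ tbMonoid, ∃ Q ∈ tbMonoid, X = P * Tmat * Q := by
  induction hX using Submonoid.closure_induction_left with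
  | one => simp at h01
  | mul_left x hx Y hY ih =>
    rcases hx with rfl | rfl
    · exact ⟨1, one_mem _, Y, hY, by simp⟩
    · obtain ⟨P, hP, Q, hQ, rfl⟩ :=
        ih (by simpa [Matrix.mul_apply, Fin.sum_univ_two] using h01)
      exact ⟨Bmat * P, mul_mem Bmat_mem_tbMonoid hP, Q, hQ, by group⟩

lemma exists_eq_mul_Bmat_mul (hX : X ∈ tbMonoid) (h10 : X 1 0 ≠ 0) :
    ∃ P ∈ tbMonoid, ∃ Q ∈ tbMonoid, X = P * Bmat * Q := by
  induction hX using Submonoid.closure_induction_left with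
  | one => simp at h10
  | mul_left x hx Y hY ih =>
    rcases hx with rfl | rfl
    · obtain ⟨P, hP, Q, hQ, rfl⟩ :=
        ih (by simpa [Matrix.mul_apply, Fin.sum_univ_two] using h10)
      exact ⟨Tmat * P, mul_mem Tmat_mem_tbMonoid hP, Q, hQ, by group⟩
    · exact ⟨1, one_mem _, Y, hY, by simp⟩

def lrProducts : Subsemigroup SL(2, ℤ) where
  carrier := {X | ∃ n : ℕ, 1 ≤ n ∧ ∃ a b : Fin n → ℕ, (∀ i, 0 < a i) ∧ (∀ i, 0 < b i) ∧
    X = (List.ofFn fun i : Fin n => Tmat ^ a i * Bmat ^ b i).prod}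
  mul_mem' := by
    rintro _ _ ⟨m, hm, a, b, ha, hb, rfl⟩ ⟨n, -, a', b', ha', hb', rfl⟩
    refine ⟨m + n, by omega, Fin.append a a', Fin.append b b', ?_, ?_, ?_⟩
    · exact Fin.addCases (by simpa using ha) (by simpa using ha')
    · exact Fin.addCases (by simpa using hb) (by simpa using hb')
    · simp [List.ofFn_add, Fin.append_right]

lemma Tmat_pow_mul_Bmat_pow_mem_lrProducts {a b : ℕ} (ha : 0 < a) (hb : 0 < b) :
    Tmat ^ a * Bmat ^ b ∈ lrProducts :=
  ⟨1, le_rfl, fun _ => a, fun _ => b, fun _ => ha, fun _ => hb, by simp⟩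

lemma Tmat_pow_mul_Bmat_pow_mul_mul_Bmat_mem_lrProducts (hX : X ∈ tbMonoid) {a : ℕ}
    (ha : 0 < a) (c : ℕ) : Tmat ^ a * Bmat ^ c * X * Bmat ∈ lrProducts := by
  induction hX using Submonoid.closure_induction_left generalizing a c with
  | one =>
    simpa [pow_succ, mul_assoc] using Tmat_pow_mul_Bmat_pow_mem_lrProducts ha c.succ_pos
  | mul_left x hx Y hY ih =>
    rcases hx with rfl | rfl
    · rcases c.eq_zero_or_pos with rfl | hc
      · simpa [pow_succ, mul_assoc] using ih a.succ_pos 0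
      · simpa [mul_assoc] using
          mul_mem (Tmat_pow_mul_Bmat_pow_mem_lrProducts ha hc) (ih one_pos 0)
    · simpa [pow_succ, mul_assoc] using ih ha (c + 1)

lemma exists_lrProducts_isConj_mul_Tmat_mul_mul_Bmat {P Q : SL(2, ℤ)} (hP : P ∈ tbMonoid)
    (hQ : Q ∈ tbMonoid) : ∃ Y ∈ lrProducts, IsConj (P * Tmat * Q * Bmat) Y := by
  induction hP using Submonoid.closure_induction_left generalizing Q with
  | one =>
    refine ⟨_, ?_, .refl _⟩
    simpa using Tmat_pow_mul_Bmat_pow_mul_mul_Bmat_mem_lrProducts hQ one_pos 0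
  | mul_left x hx P hP ih =>
    rcases hx with rfl | rfl
    · refine ⟨_, ?_, .refl _⟩
      simpa [mul_assoc] using Tmat_pow_mul_Bmat_pow_mul_mul_Bmat_mem_lrProducts
        (mul_mem (mul_mem hP Tmat_mem_tbMonoid) hQ) one_pos 0
    · obtain ⟨Y, hY, hconj⟩ := ih (mul_mem hQ Bmat_mem_tbMonoid)
      exact ⟨Y, hY, (isConj_iff.mpr ⟨Bmat⁻¹, by group⟩).trans hconj⟩

theorem exists_lrProducts_isConj (hX : X ∈ tbMonoid) (h01 : X 0 1 ≠ 0) (h10 : X 1 0 ≠ 0) :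
    ∃ Y ∈ lrProducts, IsConj X Y := by
  rcases eq_one_or_eq_Tmat_mul_or_eq_Bmat_mul hX with rfl | ⟨Y, hY, rfl | rfl⟩
  · simp at h01
  · obtain ⟨P, hP, Q, hQ, rfl⟩ :=
      exists_eq_mul_Bmat_mul hY (by simpa [Matrix.mul_apply, Fin.sum_univ_two] using h10)
    obtain ⟨Z, hZ, hconj⟩ := exists_lrProducts_isConj_mul_Tmat_mul_mul_Bmat hQ hP
    exact ⟨Z, hZ, (isConj_iff.mpr ⟨Q, by group⟩).trans hconj⟩
  · obtain ⟨P, hP, Q, hQ, rfl⟩ :=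
      exists_eq_mul_Tmat_mul hY (by simpa [Matrix.mul_apply, Fin.sum_univ_two] using h01)
    obtain ⟨Z, hZ, hconj⟩ := exists_lrProducts_isConj_mul_Tmat_mul_mul_Bmat hP hQ
    exact ⟨Z, hZ, (isConj_iff.mpr ⟨Bmat⁻¹, by group⟩).trans hconj⟩

end Words

end LRDecomposition

open LRDecomposition in
/-- Every element of `SL₂(ℤ)` of trace of absolute value `> 2` is, up to sign, conjugate
to a product `T^{a₁} B^{b₁} ⋯ T^{aₙ} B^{bₙ}` with all `aᵢ, bᵢ` positive. -/
theorem stmt0 (A : Matrix.SpecialLinearGroup (Fin 2) ℤ)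
    (hA : 2 < |Matrix.trace (A : Matrix (Fin 2) (Fin 2) ℤ)|) :
    ∃ ε : Matrix.SpecialLinearGroup (Fin 2) ℤ,
      ((ε : Matrix (Fin 2) (Fin 2) ℤ) = 1 ∨ (ε : Matrix (Fin 2) (Fin 2) ℤ) = -1) ∧
      ∃ n : ℕ, 1 ≤ n ∧ ∃ a b : Fin n → ℕ,
        (∀ i, 0 < a i) ∧ (∀ i, 0 < b i) ∧
        IsConj (ε * A) ((List.ofFn fun i : Fin n => Tmat ^ a i * Bmat ^ b i).prod) := by
  obtain ⟨ε, hε, ht⟩ : ∃ ε : SL(2, ℤ), ((ε : Matrix (Fin 2) (Fin 2) ℤ) = 1 ∨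
      (ε : Matrix (Fin 2) (Fin 2) ℤ) = -1) ∧ 3 ≤ (ε * A) 0 0 + (ε * A) 1 1 := by
    rw [trace_fin_two] at hA
    rcases lt_abs.mp hA with h | h
    · exact ⟨1, Or.inl rfl, by simp; omega⟩
    · exact ⟨-1, Or.inr rfl, by simp; omega⟩
  obtain ⟨N, hAN, hN⟩ := exists_isConj_entries_pos ht
  obtain ⟨Y, ⟨n, hn, a, b, ha, hb, rfl⟩, hNY⟩ := exists_lrProducts_isConj
    (mem_tbMonoid_of_nonneg fun i j => (hN i j).le) (hN 0 1).ne' (hN 1 0).ne'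
  exact ⟨ε, hε, n, hn, a, b, ha, hb, hAN.trans hNY⟩
end

section
/- Let 𝒲 be the quotient of the free unital ℂ-algebra on six generators U, V, W, U⁻, V⁻, W⁻ by the two-sided ideal generated by V·U − q⁴·U·V, W·V − q⁴·V·W, U·W − q⁴·W·U, U·U⁻ − 1, U⁻·U − 1, V·V⁻ − 1, V⁻·V − 1, W·W⁻ − 1, W⁻·W − 1. Let E be a nonzero finite-dimensional complex vector space and let ρ : 𝒲 → End(E) be a unital ℂ-algebra homomorphism such that the only subspaces of E invariant under ρ(x) for all x ∈ 𝒲 are {0} and E. Then dim E = N, and there exist nonzero complex numbers u, v, h and a linear isomorphism T : ℂ^N → E such that T⁻¹·ρ(U)·T = M_U(u), T⁻¹·ρ(V)·T = M_V(v), and T⁻¹·ρ(W)·T = M_W(u,v,h). -/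
open Matrix

/-- The image of the generator `U` of the Chekhov–Fock algebra of the once-punctured torus
under the standard representation: the diagonal matrix with entries `u·q^{4i}`. -/
noncomputable def MU (N : ℕ) (q u : ℂ) : Matrix (Fin N) (Fin N) ℂ :=
  Matrix.diagonal fun i => u * q ^ (4 * (i : ℕ))

/-- The image of the generator `V`: the cyclic shift matrix with entries `v`. -/
noncomputable def MV (N : ℕ) (v : ℂ) : Matrix (Fin N) (Fin N) ℂ :=
  Matrix.of fun i j => if (j : ℕ) = ((i : ℕ) + 1) % N then v else 0

/-- The image of the generator `W`: `q⁻²·h·(M_U(u)·M_V(v))⁻¹`. -/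
noncomputable def MW (N : ℕ) (q u v h : ℂ) : Matrix (Fin N) (Fin N) ℂ :=
  ((q ^ 2)⁻¹ * h) • (MU N q u * MV N v)⁻¹

/-- The generators of the free algebra on six generators `U, V, W, U⁻¹, V⁻¹, W⁻¹`
(in this order). -/
noncomputable def X (i : Fin 6) : FreeAlgebra ℂ (Fin 6) := FreeAlgebra.ι ℂ i

/-- The defining relations of the Chekhov–Fock algebra of the once-punctured torus:
`VU = q⁴UV`, `WV = q⁴VW`, `UW = q⁴WU`, and the inverse relations. -/
inductive CFRel (q : ℂ) : FreeAlgebra ℂ (Fin 6) → FreeAlgebra ℂ (Fin 6) → Prop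
  | vu : CFRel q (X 1 * X 0) ((q ^ 4) • (X 0 * X 1))
  | wv : CFRel q (X 2 * X 1) ((q ^ 4) • (X 1 * X 2))
  | uw : CFRel q (X 0 * X 2) ((q ^ 4) • (X 2 * X 0))
  | uuinv : CFRel q (X 0 * X 3) 1
  | uinvu : CFRel q (X 3 * X 0) 1
  | vvinv : CFRel q (X 1 * X 4) 1
  | vinvv : CFRel q (X 4 * X 1) 1
  | wwinv : CFRel q (X 2 * X 5) 1
  | winvw : CFRel q (X 5 * X 2) 1

/-!
Since `N` is odd, `q ^ 4` is again a primitive `N`-th root of unity. Hence `V ^ N` is central in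
`𝒲`, and so is `U V W`; by Schur's lemma they act on `E` as scalars `β` and `h`. If `e` is an
eigenvector of `U` and `v ^ N = β`, the vectors `v ^ j V⁻ʲ e` are eigenvectors of `U` for the `N`
distinct eigenvalues `μ q ^ (4 j)`, depend on `j` only modulo `N`, and are shifted by `V` up to the
factor `v`. Their span is invariant, hence all of `E`, so they form a basis in which `U` and `V`
are `M_U(μ)` and `M_V(v)`; then `W = h V⁻¹ U⁻¹` is `M_W(μ, v, q² h)`.
-/

section SkewCommute

variable {K R : Type*} [CommSemiring K] [Semiring R] [Algebra K R] {a b : R} {c : K}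

theorem pow_mul_eq_smul_mul_pow (h : b * a = c • (a * b)) (n : ℕ) :
    b ^ n * a = c ^ n • (a * b ^ n) := by
  induction n with
  | zero => simp
  | succ n ih =>
    calc b ^ (n + 1) * a = b ^ n * (b * a) := by rw [pow_succ, mul_assoc]
      _ = c • ((b ^ n * a) * b) := by rw [h, mul_smul_comm, mul_assoc]
      _ = c ^ (n + 1) • (a * b ^ (n + 1)) := by
        rw [ih, smul_mul_assoc, smul_smul, mul_assoc, ← pow_succ, ← pow_succ']

theorem mul_pow_eq_smul_pow_mul (h : b * a = c • (a * b)) (n : ℕ) :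
    b * a ^ n = c ^ n • (a ^ n * b) := by
  induction n with
  | zero => simp
  | succ n ih =>
    calc b * a ^ (n + 1) = (b * a ^ n) * a := by rw [pow_succ, mul_assoc]
      _ = c ^ n • (a ^ n * (b * a)) := by rw [ih, smul_mul_assoc, mul_assoc]
      _ = c ^ (n + 1) • (a ^ (n + 1) * b) := by
        rw [h, mul_smul_comm, smul_smul, ← mul_assoc, ← pow_succ, ← pow_succ]

theorem commute_pow_left_of_mul_eq_smul_mul {n : ℕ} (h : b * a = c • (a * b))
    (hc : c ^ n = 1) : Commute (b ^ n) a := by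
  rw [Commute, SemiconjBy, pow_mul_eq_smul_mul_pow h, hc, one_smul]

theorem commute_pow_right_of_mul_eq_smul_mul {n : ℕ} (h : b * a = c • (a * b))
    (hc : c ^ n = 1) : Commute b (a ^ n) := by
  rw [Commute, SemiconjBy, mul_pow_eq_smul_pow_mul h, hc, one_smul]

theorem mul_eq_smul_mul_of_mul_eq_one {b' : R} (h : b * a = c • (a * b)) (hbb' : b * b' = 1)
    (hb'b : b' * b = 1) : a * b' = c • (b' * a) :=
  calc a * b' = b' * (b * a) * b' := by rw [← mul_assoc, hb'b, one_mul]
    _ = c • (b' * a * (b * b')) := by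
      rw [h, mul_smul_comm, smul_mul_assoc, ← mul_assoc, mul_assoc _ b]
    _ = c • (b' * a) := by rw [hbb', mul_one]

end SkewCommute

section SkewTriple

variable {K R : Type*} [Field K] [Ring R] [Algebra K R] {a b d : R} {c : K}

theorem commute_mul_mul_left_of_skew (hc : c ≠ 0) (hba : b * a = c • (a * b))
    (had : a * d = c • (d * a)) : Commute (a * b * d) a := by
  refine smul_right_injective R hc ?_
  change c • (a * b * d * a) = c • (a * (a * b * d))
  calc c • (a * b * d * a) = a * b * (a * d) := by rw [had, mul_smul_comm, ← mul_assoc]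
    _ = c • (a * (a * b * d)) := by
      rw [← mul_assoc, mul_assoc a b a, hba, mul_smul_comm, smul_mul_assoc]
      simp only [mul_assoc]

theorem commute_mul_mul_middle_of_skew (hba : b * a = c • (a * b))
    (hdb : d * b = c • (b * d)) : Commute (a * b * d) b := by
  change a * b * d * b = b * (a * b * d)
  rw [← mul_assoc b, ← mul_assoc b, hba, mul_assoc, hdb, mul_smul_comm, smul_mul_assoc,
    smul_mul_assoc]
  simp only [mul_assoc]

theorem commute_mul_mul_right_of_skew (hc : c ≠ 0) (hdb : d * b = c • (b * d))
    (had : a * d = c • (d * a)) : Commute (a * b * d) d := by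
  refine smul_right_injective R hc ?_
  change c • (a * b * d * d) = c • (d * (a * b * d))
  calc c • (a * b * d * d) = a * (d * b) * d := by
        rw [hdb, mul_smul_comm, smul_mul_assoc]
        simp only [mul_assoc]
    _ = c • (d * (a * b * d)) := by
      rw [← mul_assoc, had, smul_mul_assoc, smul_mul_assoc]
      simp only [mul_assoc]

end SkewTriple

theorem Commute.of_mul_eq_one_right {M : Type*} [Monoid M] {a b b' : M} (h : Commute a b)
    (hbb' : b * b' = 1) (hb'b : b' * b = 1) : Commute a b' :=
  h.units_inv_right (u := ⟨b, b', hbb', hb'b⟩)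

section Invariance

variable {K A E : Type*} [Field K] [Ring A] [Algebra K A] [AddCommGroup E] [Module K E]

theorem mapsTo_of_mul_eq_one [FiniteDimensional K E] {f g : Module.End K E} (hgf : g * f = 1)
    {p : Submodule K E} (hp : ∀ e ∈ p, f e ∈ p) : ∀ e ∈ p, g e ∈ p := by
  have hinj : Function.Injective (f.restrict hp) := by
    intro x y hxy
    have := congr(g ($(hxy) : E))
    simp only [LinearMap.restrict_apply] at this
    exact Subtype.ext (by simpa [← Module.End.mul_apply, hgf] using this)
  intro e he
  obtain ⟨e', he'⟩ := LinearMap.injective_iff_surjective.mp hinj ⟨e, he⟩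
  have hfe' : f e' = e := congr_arg Subtype.val he'
  rw [← hfe', ← Module.End.mul_apply, hgf, Module.End.one_apply]
  exact e'.2

theorem mapsTo_span_range {ι : Type*} {g : ι → E} {f : Module.End K E}
    (hf : ∀ i, f (g i) ∈ Submodule.span K (Set.range g)) :
    ∀ e ∈ Submodule.span K (Set.range g), f e ∈ Submodule.span K (Set.range g) :=
  fun _ he => (Submodule.span_le (p := (Submodule.span K (Set.range g)).comap f)).mpr
    (Set.range_subset_iff.mpr hf) he

theorem forall_mapsTo_of_adjoin_eq_top {s : Set A} (hs : Algebra.adjoin K s = ⊤)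
    (ρ : A →ₐ[K] Module.End K E) {p : Submodule K E} (hp : ∀ a ∈ s, ∀ e ∈ p, ρ a e ∈ p)
    (x : A) : ∀ e ∈ p, ρ x e ∈ p := by
  have hx : x ∈ Algebra.adjoin K s := hs ▸ Algebra.mem_top
  induction hx using Algebra.adjoin_induction with
  | mem a ha => exact hp a ha
  | algebraMap r => simpa using fun e he => p.smul_mem r he
  | add x y _ _ hx hy => simpa using fun e he => p.add_mem (hx e he) (hy e he)
  | mul x y _ _ hx hy => simpa using fun e he => hx _ (hy e he)

theorem forall_commute_of_adjoin_eq_top {R : Type*} [Ring R] [Algebra K R] {s : Set A}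
    (hs : Algebra.adjoin K s = ⊤) (φ : A →ₐ[K] R) {z : R} (hz : ∀ a ∈ s, Commute z (φ a))
    (x : A) : Commute z (φ x) := by
  have hle : Algebra.adjoin K s ≤ (Subalgebra.centralizer K {z}).comap φ :=
    Algebra.adjoin_le fun a ha => by simpa [Set.mem_centralizer_iff] using (hz a ha).eq
  simpa [Subalgebra.mem_centralizer_iff, Commute, SemiconjBy] using
    hle (hs ▸ Algebra.mem_top : x ∈ Algebra.adjoin K s)

theorem exists_eq_smul_one_of_forall_commute [IsAlgClosed K] [FiniteDimensional K E]
    [Nontrivial E] (ρ : A →ₐ[K] Module.End K E)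
    (hirr : ∀ p : Submodule K E, (∀ x : A, ∀ e ∈ p, ρ x e ∈ p) → p = ⊥ ∨ p = ⊤)
    {S : Module.End K E} (hS : ∀ x, Commute S (ρ x)) : ∃ c : K, S = c • 1 := by
  obtain ⟨c, hc⟩ := Module.End.exists_eigenvalue S
  have hinv : ∀ x, ∀ e ∈ S.eigenspace c, ρ x e ∈ S.eigenspace c := by
    intro x e he
    rw [Module.End.mem_eigenspace_iff] at he ⊢
    rw [← Module.End.mul_apply, (hS x).eq, Module.End.mul_apply, he, map_smul]
  refine ⟨c, ?_⟩
  rcases hirr _ hinv with hbot | htop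
  · exact absurd hbot (Module.End.hasEigenvalue_iff.mp hc)
  · ext e
    simpa using Module.End.mem_eigenspace_iff.mp (htop ▸ Submodule.mem_top : e ∈ S.eigenspace c)

end Invariance

section ShiftOrbit

variable {K E : Type*} [Field K] [AddCommGroup E] [Module K E]

def shiftOrbit (B' : Module.End K E) (v : K) (e : E) (j : ℕ) : E := v ^ j • (B' ^ j) e

variable {A B B' : Module.End K E} {v : K} {e : E}

theorem shiftOrbit_succ (j : ℕ) : shiftOrbit B' v e (j + 1) = v • B' (shiftOrbit B' v e j) := by
  rw [shiftOrbit, shiftOrbit, map_smul, smul_smul, pow_succ', pow_succ', Module.End.mul_apply]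

theorem apply_shiftOrbit {c μ : K} (hAB' : A * B' = c • (B' * A)) (he : A e = μ • e) (j : ℕ) :
    A (shiftOrbit B' v e j) = (μ * c ^ j) • shiftOrbit B' v e j := by
  rw [shiftOrbit, map_smul, ← Module.End.mul_apply, mul_pow_eq_smul_pow_mul hAB',
    LinearMap.smul_apply, Module.End.mul_apply, he, map_smul, smul_smul, smul_smul, smul_smul]
  ring_nf

theorem apply_shiftOrbit_succ (hB : B * B' = 1) (j : ℕ) :
    B (shiftOrbit B' v e (j + 1)) = v • shiftOrbit B' v e j := by
  rw [shiftOrbit_succ, map_smul, ← Module.End.mul_apply, hB, Module.End.one_apply]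

theorem pow_apply_shiftOrbit (hB : B * B' = 1) (j : ℕ) :
    (B ^ j) (shiftOrbit B' v e j) = v ^ j • e := by
  induction j with
  | zero => simp [shiftOrbit]
  | succ j ih =>
    rw [pow_succ, Module.End.mul_apply, apply_shiftOrbit_succ hB, map_smul, ih, smul_smul,
      pow_succ']

theorem shiftOrbit_ne_zero (hB : B * B' = 1) (hv : v ≠ 0) (he : e ≠ 0) (j : ℕ) :
    shiftOrbit B' v e j ≠ 0 := by
  intro h0
  have := pow_apply_shiftOrbit (v := v) (e := e) hB j
  rw [h0, map_zero, eq_comm, smul_eq_zero] at this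
  exact this.elim (pow_ne_zero j hv) he

theorem shiftOrbit_periodic {N : ℕ} (h : v ^ N • B' ^ N = 1) :
    Function.Periodic (shiftOrbit B' v e) N := by
  intro j
  have hN : v ^ N • (B' ^ N) e = e := by rw [← LinearMap.smul_apply, h, Module.End.one_apply]
  simp only [shiftOrbit, pow_add, Module.End.mul_apply, mul_smul]
  rw [← map_smul (B' ^ j) (v ^ N), hN]

theorem apply_shiftOrbit_fin {N : ℕ} [NeZero N] (hB : B * B' = 1) (h : v ^ N • B' ^ N = 1)
    (i : Fin N) : B (shiftOrbit B' v e i) = v • shiftOrbit B' v e (i - 1 : Fin N) := by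
  have hi : (i : ℕ) = ((i - 1 : Fin N) + 1) % N := by
    conv_lhs => rw [← sub_add_cancel i 1]
    rw [Fin.val_add, Fin.val_one', Nat.add_mod_mod]
  rw [hi, (shiftOrbit_periodic h).map_mod_nat, apply_shiftOrbit_succ hB]

end ShiftOrbit

theorem exists_basis_eigen_shift {K E : Type*} [Field K] [IsAlgClosed K] [AddCommGroup E]
    [Module K E] [FiniteDimensional K E] [Nontrivial E] {N : ℕ} [NeZero N] {c : K}
    (hc : IsPrimitiveRoot c N) {A A' B B' : Module.End K E} (hA : A' * A = 1) (hB : B * B' = 1)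
    (hB' : B' * B = 1) (hBA : B * A = c • (A * B)) {β : K} (hβ : B ^ N = β • 1)
    (hirr : ∀ p : Submodule K E, (∀ e ∈ p, A e ∈ p) → (∀ e ∈ p, B e ∈ p) → p = ⊥ ∨ p = ⊤) :
    ∃ (b : Module.Basis (Fin N) K E) (μ v : K), μ ≠ 0 ∧ v ≠ 0 ∧
      (∀ i, A (b i) = (μ * c ^ (i : ℕ)) • b i) ∧ ∀ i, B (b i) = v • b (i - 1) := by
  obtain ⟨μ, hμ⟩ := Module.End.exists_eigenvalue A
  obtain ⟨e, he⟩ := hμ.exists_hasEigenvector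
  have hAe : A e = μ • e := he.apply_eq_smul
  have hμ0 : μ ≠ 0 := by
    rintro rfl
    apply he.2
    rw [← Module.End.one_apply (R := K) e, ← hA, Module.End.mul_apply, hAe, zero_smul, map_zero]
  obtain ⟨v, hv⟩ := IsAlgClosed.exists_pow_nat_eq β (NeZero.pos N)
  have hvB' : v ^ N • B' ^ N = 1 := by
    rw [hv, ← smul_one_mul, ← hβ, ← Commute.mul_pow (hB.trans hB'.symm), hB, one_pow]
  have hv0 : v ≠ 0 := by
    rintro rfl
    simp [zero_pow (NeZero.ne N)] at hvB'
  set g : Fin N → E := fun i => shiftOrbit B' v e i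
  have hgA (i : Fin N) : A (g i) = (μ * c ^ (i : ℕ)) • g i :=
    apply_shiftOrbit (mul_eq_smul_mul_of_mul_eq_one hBA hB hB') hAe i
  have hgB (i : Fin N) : B (g i) = v • g (i - 1) := apply_shiftOrbit_fin hB hvB' i
  have hli : LinearIndependent K g := by
    refine Module.End.eigenvectors_linearIndependent' A (fun i : Fin N => μ * c ^ (i : ℕ)) ?_ g
      fun i => ⟨Module.End.mem_eigenspace_iff.mpr (hgA i), shiftOrbit_ne_zero hB hv0 he.2 i⟩
    intro i j hij
    exact Fin.ext (hc.pow_inj i.2 j.2 (mul_left_cancel₀ hμ0 hij))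
  set p := Submodule.span K (Set.range g)
  have hmem (i : Fin N) : g i ∈ p := Submodule.subset_span ⟨i, rfl⟩
  have hp : p = ⊤ := by
    refine (hirr p (mapsTo_span_range fun i => ?_) (mapsTo_span_range fun i => ?_)).resolve_left
      fun hbot => shiftOrbit_ne_zero hB hv0 he.2 _ ((Submodule.mem_bot K).mp (hbot ▸ hmem 0))
    · exact hgA i ▸ p.smul_mem _ (hmem i)
    · exact hgB i ▸ p.smul_mem _ (hmem _)
  refine ⟨Module.Basis.mk hli hp.ge, μ, v, hμ0, hv0, fun i => ?_, fun i => ?_⟩ <;>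
    simp only [Module.Basis.mk_apply]
  exacts [hgA i, hgB i]

theorem LinearMap.toMatrix_mulVec_eq_equivFun {R ι M : Type*} [CommRing R] [Fintype ι]
    [DecidableEq ι] [AddCommGroup M] [Module R M] (b : Module.Basis ι R M) (f : Module.End R M)
    (x : ι → R) : LinearMap.toMatrix b b f *ᵥ x = b.equivFun (f (b.equivFun.symm x)) := by
  rw [Module.Basis.equivFun_apply, ← LinearMap.toMatrix_mulVec_repr b b,
    ← Module.Basis.equivFun_apply, LinearEquiv.apply_symm_apply]

section StandardMatrices

variable {N : ℕ} {E : Type*} [AddCommGroup E] [Module ℂ E] (b : Module.Basis (Fin N) ℂ E)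

theorem toMatrix_eq_MU {q u : ℂ} {A : Module.End ℂ E}
    (hA : ∀ i, A (b i) = (u * q ^ (4 * (i : ℕ))) • b i) :
    LinearMap.toMatrix b b A = MU N q u := by
  rw [← LinearEquiv.eq_symm_apply, LinearMap.toMatrix_symm]
  refine b.ext fun j => ?_
  simp [hA, MU, Matrix.diagonal_apply, ite_smul]

theorem toMatrix_eq_MV [NeZero N] {v : ℂ} {B : Module.End ℂ E}
    (hB : ∀ i, B (b i) = v • b (i - 1)) : LinearMap.toMatrix b b B = MV N v := by
  rw [← LinearEquiv.eq_symm_apply, LinearMap.toMatrix_symm]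
  refine b.ext fun j => ?_
  have hcond (i : Fin N) : (j : ℕ) = ((i : ℕ) + 1) % N ↔ i = j - 1 := by
    rw [eq_sub_iff_add_eq, Fin.ext_iff, Fin.val_add, Fin.val_one', Nat.add_mod_mod, eq_comm]
  simp [hB, MV, hcond, ite_smul]

theorem toMatrix_eq_MW {q u v h : ℂ} (hq : q ≠ 0) {A A' B B' : Module.End ℂ E}
    (hA : LinearMap.toMatrix b b A = MU N q u) (hB : LinearMap.toMatrix b b B = MV N v)
    (hA' : A' * A = 1) (hB' : B' * B = 1) :
    LinearMap.toMatrix b b (h • (B' * A')) = MW N q u v (q ^ 2 * h) := by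
  have toMatrix_of_mul_eq_one {f f' : Module.End ℂ E} (hf : f' * f = 1) :
      LinearMap.toMatrix b b f' = (LinearMap.toMatrix b b f)⁻¹ :=
    (Matrix.inv_eq_left_inv (by rw [← LinearMap.toMatrix_mul, hf, LinearMap.toMatrix_one])).symm
  rw [MW, _root_.map_smul, LinearMap.toMatrix_mul, toMatrix_of_mul_eq_one hA',
    toMatrix_of_mul_eq_one hB', hA, hB, Matrix.mul_inv_rev,
    inv_mul_cancel_left₀ (pow_ne_zero 2 hq)]

end StandardMatrices

namespace ChekhovFock

noncomputable abbrev gen (q : ℂ) (i : Fin 6) : RingQuot (CFRel q) :=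
  RingQuot.mkAlgHom ℂ (CFRel q) (X i)

theorem adjoin_range_gen (q : ℂ) : Algebra.adjoin ℂ (Set.range (gen q)) = ⊤ := by
  rw [show Set.range (gen q) = RingQuot.mkAlgHom ℂ (CFRel q) '' Set.range (FreeAlgebra.ι ℂ) from
      Set.range_comp _ _, ← AlgHom.map_adjoin, FreeAlgebra.adjoin_range_ι, Algebra.map_top,
    AlgHom.range_eq_top]
  exact RingQuot.mkAlgHom_surjective ℂ _

section Relations

variable {q : ℂ} {R : Type*} [Ring R] [Algebra ℂ R] (φ : RingQuot (CFRel q) →ₐ[ℂ] R)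

theorem map_gen_one_mul_map_gen_zero :
    φ (gen q 1) * φ (gen q 0) = q ^ 4 • (φ (gen q 0) * φ (gen q 1)) := by
  simpa using congrArg φ (RingQuot.mkAlgHom_rel ℂ CFRel.vu)

theorem map_gen_two_mul_map_gen_one :
    φ (gen q 2) * φ (gen q 1) = q ^ 4 • (φ (gen q 1) * φ (gen q 2)) := by
  simpa using congrArg φ (RingQuot.mkAlgHom_rel ℂ CFRel.wv)

theorem map_gen_zero_mul_map_gen_two :
    φ (gen q 0) * φ (gen q 2) = q ^ 4 • (φ (gen q 2) * φ (gen q 0)) := by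
  simpa using congrArg φ (RingQuot.mkAlgHom_rel ℂ CFRel.uw)

theorem map_gen_zero_mul_map_gen_three : φ (gen q 0) * φ (gen q 3) = 1 := by
  simpa using congrArg φ (RingQuot.mkAlgHom_rel ℂ CFRel.uuinv)

theorem map_gen_three_mul_map_gen_zero : φ (gen q 3) * φ (gen q 0) = 1 := by
  simpa using congrArg φ (RingQuot.mkAlgHom_rel ℂ CFRel.uinvu)

theorem map_gen_one_mul_map_gen_four : φ (gen q 1) * φ (gen q 4) = 1 := by
  simpa using congrArg φ (RingQuot.mkAlgHom_rel ℂ CFRel.vvinv)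

theorem map_gen_four_mul_map_gen_one : φ (gen q 4) * φ (gen q 1) = 1 := by
  simpa using congrArg φ (RingQuot.mkAlgHom_rel ℂ CFRel.vinvv)

theorem map_gen_two_mul_map_gen_five : φ (gen q 2) * φ (gen q 5) = 1 := by
  simpa using congrArg φ (RingQuot.mkAlgHom_rel ℂ CFRel.wwinv)

theorem map_gen_five_mul_map_gen_two : φ (gen q 5) * φ (gen q 2) = 1 := by
  simpa using congrArg φ (RingQuot.mkAlgHom_rel ℂ CFRel.winvw)

theorem commute_map_of_commute_map_gen {z : R} (hU : Commute z (φ (gen q 0)))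
    (hV : Commute z (φ (gen q 1))) (hW : Commute z (φ (gen q 2))) (x : RingQuot (CFRel q)) :
    Commute z (φ x) := by
  refine forall_commute_of_adjoin_eq_top (adjoin_range_gen q) φ ?_ x
  rintro _ ⟨i, rfl⟩
  fin_cases i
  exacts [hU, hV, hW,
    hU.of_mul_eq_one_right (map_gen_zero_mul_map_gen_three φ) (map_gen_three_mul_map_gen_zero φ),
    hV.of_mul_eq_one_right (map_gen_one_mul_map_gen_four φ) (map_gen_four_mul_map_gen_one φ),
    hW.of_mul_eq_one_right (map_gen_two_mul_map_gen_five φ) (map_gen_five_mul_map_gen_two φ)]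

theorem commute_map_gen_one_pow {N : ℕ} (hq : (q ^ 4) ^ N = 1) (x : RingQuot (CFRel q)) :
    Commute (φ (gen q 1) ^ N) (φ x) :=
  commute_map_of_commute_map_gen φ
    (commute_pow_left_of_mul_eq_smul_mul (map_gen_one_mul_map_gen_zero φ) hq)
    ((Commute.refl _).pow_left N)
    (commute_pow_right_of_mul_eq_smul_mul (map_gen_two_mul_map_gen_one φ) hq).symm x

theorem commute_map_gen_mul_map_gen_mul_map_gen (hq : q ≠ 0) (x : RingQuot (CFRel q)) :
    Commute (φ (gen q 0) * φ (gen q 1) * φ (gen q 2)) (φ x) := by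
  have hq4 : q ^ 4 ≠ 0 := pow_ne_zero 4 hq
  exact commute_map_of_commute_map_gen φ
    (commute_mul_mul_left_of_skew hq4 (map_gen_one_mul_map_gen_zero φ)
      (map_gen_zero_mul_map_gen_two φ))
    (commute_mul_mul_middle_of_skew (map_gen_one_mul_map_gen_zero φ)
      (map_gen_two_mul_map_gen_one φ))
    (commute_mul_mul_right_of_skew hq4 (map_gen_two_mul_map_gen_one φ)
      (map_gen_zero_mul_map_gen_two φ)) x

theorem map_gen_two_eq_smul {h : ℂ}
    (hh : φ (gen q 0) * φ (gen q 1) * φ (gen q 2) = h • 1) :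
    φ (gen q 2) = h • (φ (gen q 4) * φ (gen q 3)) := by
  calc φ (gen q 2) = φ (gen q 4) * φ (gen q 3) * (φ (gen q 0) * φ (gen q 1) * φ (gen q 2)) := by
        rw [show φ (gen q 4) * φ (gen q 3) * (φ (gen q 0) * φ (gen q 1) * φ (gen q 2)) =
            φ (gen q 4) * (φ (gen q 3) * φ (gen q 0)) * φ (gen q 1) * φ (gen q 2) by
              simp only [mul_assoc],
          map_gen_three_mul_map_gen_zero, mul_one, map_gen_four_mul_map_gen_one, one_mul]
    _ = h • (φ (gen q 4) * φ (gen q 3)) := by rw [hh, mul_smul_comm, mul_one]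

end Relations

section Irreducible

variable {q : ℂ} {E : Type*} [AddCommGroup E] [Module ℂ E] [FiniteDimensional ℂ E]
  (ρ : RingQuot (CFRel q) →ₐ[ℂ] Module.End ℂ E)
  (hirr : ∀ p : Submodule ℂ E, (∀ x, ∀ e ∈ p, ρ x e ∈ p) → p = ⊥ ∨ p = ⊤)
include hirr

theorem eq_bot_or_eq_top_of_mapsTo_gen {h : ℂ}
    (hWeq : ρ (gen q 2) = h • (ρ (gen q 4) * ρ (gen q 3))) (p : Submodule ℂ E)
    (hU : ∀ e ∈ p, ρ (gen q 0) e ∈ p) (hV : ∀ e ∈ p, ρ (gen q 1) e ∈ p) : p = ⊥ ∨ p = ⊤ := by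
  have hU' := mapsTo_of_mul_eq_one (map_gen_three_mul_map_gen_zero ρ) hU
  have hV' := mapsTo_of_mul_eq_one (map_gen_four_mul_map_gen_one ρ) hV
  have hW : ∀ e ∈ p, ρ (gen q 2) e ∈ p := fun e he => by
    rw [hWeq]
    exact p.smul_mem h (hV' _ (hU' e he))
  have hW' := mapsTo_of_mul_eq_one (map_gen_five_mul_map_gen_two ρ) hW
  refine hirr p (forall_mapsTo_of_adjoin_eq_top (adjoin_range_gen q) ρ ?_)
  rintro _ ⟨i, rfl⟩
  fin_cases i
  exacts [hU, hV, hW, hU', hV', hW']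

theorem exists_basis_toMatrix_eq [Nontrivial E] {N : ℕ} [NeZero N] (hq : q ≠ 0)
    (hq4 : IsPrimitiveRoot (q ^ 4) N) :
    ∃ (b : Module.Basis (Fin N) ℂ E) (u v h : ℂ), u ≠ 0 ∧ v ≠ 0 ∧ h ≠ 0 ∧
      LinearMap.toMatrix b b (ρ (gen q 0)) = MU N q u ∧
      LinearMap.toMatrix b b (ρ (gen q 1)) = MV N v ∧
      LinearMap.toMatrix b b (ρ (gen q 2)) = MW N q u v h := by
  obtain ⟨β, hβ⟩ := exists_eq_smul_one_of_forall_commute ρ hirr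
    (commute_map_gen_one_pow ρ hq4.pow_eq_one)
  obtain ⟨h, hh⟩ := exists_eq_smul_one_of_forall_commute ρ hirr
    (commute_map_gen_mul_map_gen_mul_map_gen ρ hq)
  have hW := map_gen_two_eq_smul ρ hh
  have h0 : h ≠ 0 := by
    rintro rfl
    have := map_gen_two_mul_map_gen_five ρ
    rw [hW, zero_smul, zero_mul] at this
    exact zero_ne_one this
  obtain ⟨b, u, v, hu, hv, hbU, hbV⟩ := exists_basis_eigen_shift hq4
    (map_gen_three_mul_map_gen_zero ρ) (map_gen_one_mul_map_gen_four ρ)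
    (map_gen_four_mul_map_gen_one ρ) (map_gen_one_mul_map_gen_zero ρ) hβ
    (eq_bot_or_eq_top_of_mapsTo_gen ρ hirr hW)
  have hMU := toMatrix_eq_MU b fun i => by rw [hbU, pow_mul]
  have hMV := toMatrix_eq_MV b hbV
  refine ⟨b, u, v, q ^ 2 * h, hu, hv, mul_ne_zero (pow_ne_zero 2 hq) h0, hMU, hMV, ?_⟩
  rw [hW]
  exact toMatrix_eq_MW b hq hMU hMV (map_gen_three_mul_map_gen_zero ρ)
    (map_gen_four_mul_map_gen_one ρ)

end Irreducible

end ChekhovFock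

theorem stmt4_general (N : ℕ) (hN : Odd N) (q : ℂ) (hq : IsPrimitiveRoot q N)
    (E : Type) [AddCommGroup E] [Module ℂ E] [FiniteDimensional ℂ E] [Nontrivial E]
    (ρ : RingQuot (CFRel q) →ₐ[ℂ] Module.End ℂ E)
    (hirr : ∀ p : Submodule ℂ E,
      (∀ x : RingQuot (CFRel q), ∀ e ∈ p, ρ x e ∈ p) → p = ⊥ ∨ p = ⊤) :
    Module.finrank ℂ E = N ∧
    ∃ u v h : ℂ, u ≠ 0 ∧ v ≠ 0 ∧ h ≠ 0 ∧
      ∃ T : (Fin N → ℂ) ≃ₗ[ℂ] E,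
        (∀ x, T.symm (ρ (RingQuot.mkAlgHom ℂ (CFRel q) (X 0)) (T x))
            = (MU N q u).mulVec x) ∧
        (∀ x, T.symm (ρ (RingQuot.mkAlgHom ℂ (CFRel q) (X 1)) (T x))
            = (MV N v).mulVec x) ∧
        (∀ x, T.symm (ρ (RingQuot.mkAlgHom ℂ (CFRel q) (X 2)) (T x))
            = (MW N q u v h).mulVec x) := by
  have : NeZero N := ⟨hN.pos.ne'⟩
  have hq4 : IsPrimitiveRoot (q ^ 4) N :=
    hq.pow_of_coprime 4 (by simpa using (Nat.coprime_two_left.mpr hN).pow_left 2)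
  obtain ⟨b, u, v, h, hu, hv, hh, hU, hV, hW⟩ :=
    ChekhovFock.exists_basis_toMatrix_eq ρ hirr (hq.ne_zero (NeZero.ne N)) hq4
  refine ⟨(Module.finrank_eq_card_basis b).trans (Fintype.card_fin N), u, v, h, hu, hv, hh,
    b.equivFun.symm, ?_, ?_, ?_⟩ <;>
  · intro x
    rw [LinearEquiv.symm_symm, ← LinearMap.toMatrix_mulVec_eq_equivFun]
    simp only [hU, hV, hW]

/-- Every irreducible finite-dimensional representation of the Chekhov–Fock algebra
`𝒲 = RingQuot (CFRel q)` has dimension `N` and is conjugate to a standard representation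
`χ_{u,v,h}`. -/
theorem stmt4 (N : ℕ) (hN : Odd N) (hNpos : 0 < N) (q : ℂ) (hq : IsPrimitiveRoot q N)
    (E : Type) [AddCommGroup E] [Module ℂ E] [FiniteDimensional ℂ E] [Nontrivial E]
    (ρ : RingQuot (CFRel q) →ₐ[ℂ] Module.End ℂ E)
    (hirr : ∀ p : Submodule ℂ E,
      (∀ x : RingQuot (CFRel q), ∀ e ∈ p, ρ x e ∈ p) → p = ⊥ ∨ p = ⊤) :
    Module.finrank ℂ E = N ∧
    ∃ u v h : ℂ, u ≠ 0 ∧ v ≠ 0 ∧ h ≠ 0 ∧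
      ∃ T : (Fin N → ℂ) ≃ₗ[ℂ] E,
        (∀ x, T.symm (ρ (RingQuot.mkAlgHom ℂ (CFRel q) (X 0)) (T x))
            = (MU N q u).mulVec x) ∧
        (∀ x, T.symm (ρ (RingQuot.mkAlgHom ℂ (CFRel q) (X 1)) (T x))
            = (MV N v).mulVec x) ∧
        (∀ x, T.symm (ρ (RingQuot.mkAlgHom ℂ (CFRel q) (X 2)) (T x))
            = (MW N q u v h).mulVec x) :=
  stmt4_general N hN q hq E ρ hirr
end

section
/- With N, q, and the matrices M_U, M_V, M_W as in the context, let u, v, h and u′, v′, h′ be nonzero complex numbers. There exists an invertible N×N complex matrix P with P·M_U(u)·P⁻¹ = M_U(u′), P·M_V(v)·P⁻¹ = M_V(v′), and P·M_W(u,v,h)·P⁻¹ = M_W(u′,v′,h′) if and only if u^N = (u′)^N, v^N = (v′)^N, and h = h′. -/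
open Matrix

-- pow mod helper
lemma pow_mod_eq {N : ℕ} {x : ℂ} (hx : x ^ N = 1) (m : ℕ) : x ^ (m % N) = x ^ m := by
  conv_rhs => rw [← Nat.mod_add_div m N]
  rw [pow_add, pow_mul, hx, one_pow, mul_one]

lemma MV_smul (N : ℕ) (v : ℂ) : MV N v = v • MV N 1 := by
  ext i j
  simp [MV, Matrix.of_apply, mul_ite]

lemma MV_mul_apply {N : ℕ} (hNpos : 0 < N) (v : ℂ) (A : Matrix (Fin N) (Fin N) ℂ) (i j : Fin N) :
    (MV N v * A) i j = v * A ⟨((i : ℕ) + 1) % N, Nat.mod_lt _ hNpos⟩ j := by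
  rw [Matrix.mul_apply]
  rw [Finset.sum_eq_single (⟨((i : ℕ) + 1) % N, Nat.mod_lt _ hNpos⟩ : Fin N)]
  · simp [MV]
  · intro k _ hk
    have : (k : ℕ) ≠ ((i : ℕ) + 1) % N := fun h => hk (Fin.ext h)
    simp [MV, this]
  · simp

noncomputable def MVinv (N : ℕ) (v : ℂ) : Matrix (Fin N) (Fin N) ℂ :=
  Matrix.of fun i j => if (i : ℕ) = ((j : ℕ) + 1) % N then v⁻¹ else 0

lemma succ_mod_inj {N : ℕ} {i j : Fin N} (h : ((i : ℕ) + 1) % N = ((j : ℕ) + 1) % N) : i = j := by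
  have h2 : (i : ℕ) % N = (j : ℕ) % N := Nat.ModEq.add_right_cancel' 1 h
  have := i.isLt; have := j.isLt
  apply Fin.ext
  rwa [Nat.mod_eq_of_lt i.isLt, Nat.mod_eq_of_lt j.isLt] at h2

lemma MV_mul_MVinv {N : ℕ} (hNpos : 0 < N) {v : ℂ} (hv : v ≠ 0) :
    MV N v * MVinv N v = 1 := by
  ext i j
  rw [MV_mul_apply hNpos]
  by_cases hij : i = j
  · subst hij
    simp [MVinv, Matrix.one_apply, mul_inv_cancel₀ hv]
  · have : ¬ (((i : ℕ) + 1) % N = ((j : ℕ) + 1) % N) := fun h => hij (succ_mod_inj h)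
    simp [MVinv, Matrix.one_apply, hij, this]

lemma isUnit_det_MV {N : ℕ} (hNpos : 0 < N) {v : ℂ} (hv : v ≠ 0) :
    IsUnit (MV N v).det :=
  Matrix.isUnit_det_of_right_inverse (MV_mul_MVinv hNpos hv)

lemma det_MU (N : ℕ) (q u : ℂ) :
    (MU N q u).det = u ^ N * ∏ i : Fin N, q ^ (4 * (i : ℕ)) := by
  simp [MU, Matrix.det_diagonal, Finset.prod_mul_distrib]

lemma isUnit_det_MU {N : ℕ} {q u : ℂ} (hq0 : q ≠ 0) (hu : u ≠ 0) :
    IsUnit (MU N q u).det := by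
  rw [det_MU, isUnit_iff_ne_zero]
  exact mul_ne_zero (pow_ne_zero _ hu)
    (Finset.prod_ne_zero_iff.mpr fun i _ => pow_ne_zero _ hq0)

lemma S_mul_MU {N : ℕ} (hNpos : 0 < N) {q : ℂ} (hq1 : q ^ N = 1) (u : ℂ) :
    MV N 1 * MU N q u = MU N q (u * q ^ 4) * MV N 1 := by
  ext i j
  rw [MV_mul_apply hNpos]
  rw [show (MU N q (u * q^4) * MV N 1) i j = (u * q^4 * q^(4*(i:ℕ))) * (MV N 1) i j from by
    simp [MU, Matrix.diagonal_mul]]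
  set k : Fin N := ⟨((i : ℕ) + 1) % N, Nat.mod_lt _ hNpos⟩ with hk
  by_cases hjk : j = k
  · subst hjk
    have hval : (k : ℕ) = ((i : ℕ) + 1) % N := rfl
    simp only [MU, Matrix.diagonal_apply_eq, MV, Matrix.of_apply, hval, if_pos rfl, one_mul, mul_one]
    have hq4 : (q ^ 4) ^ N = 1 := by rw [← pow_mul, mul_comm, pow_mul, hq1, one_pow]
    have : q ^ (4 * (((i : ℕ) + 1) % N)) = q ^ (4 * ((i : ℕ) + 1)) := by
      rw [pow_mul, pow_mul, pow_mod_eq hq4]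
    rw [this]
    simp only [if_true]
    ring
  · have h1 : k ≠ j := fun h => hjk h.symm
    have h2 : (j : ℕ) ≠ ((i : ℕ) + 1) % N := fun h => hjk (Fin.ext h)
    simp [MU, Matrix.diagonal_apply_ne _ h1, MV, h2]

lemma Spow_mul_MU {N : ℕ} (hNpos : 0 < N) {q : ℂ} (hq1 : q ^ N = 1) (u : ℂ) (k : ℕ) :
    (MV N 1) ^ k * MU N q u = MU N q (u * (q ^ 4) ^ k) * (MV N 1) ^ k := by
  induction k with
  | zero => simp
  | succ n ih =>
    rw [pow_succ', mul_assoc, ih, ← mul_assoc, S_mul_MU hNpos hq1, mul_assoc, ← pow_succ']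
    congr 2
    ring

lemma Spow_mul_MV (N : ℕ) (v : ℂ) (k : ℕ) :
    (MV N 1) ^ k * MV N v = MV N v * (MV N 1) ^ k := by
  rw [MV_smul N v, Matrix.mul_smul, Matrix.smul_mul, ← pow_succ, ← pow_succ']

lemma D_mul_MU (N : ℕ) (q u : ℂ) (d : Fin N → ℂ) :
    Matrix.diagonal d * MU N q u = MU N q u * Matrix.diagonal d := by
  have h : (fun i : Fin N => d i * (u * q ^ (4 * (i : ℕ))))
      = fun i : Fin N => u * q ^ (4 * (i : ℕ)) * d i := by funext i; ring
  rw [MU, Matrix.diagonal_mul_diagonal, Matrix.diagonal_mul_diagonal, h]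

lemma D_mul_MV {N : ℕ} {t : ℂ} (ht : t ^ N = 1) (v' : ℂ) :
    Matrix.diagonal (fun i : Fin N => t ^ (i : ℕ)) * MV N (v' * t)
      = MV N v' * Matrix.diagonal (fun i : Fin N => t ^ (i : ℕ)) := by
  ext i j
  rw [Matrix.diagonal_mul, Matrix.mul_diagonal]
  by_cases hij : (j : ℕ) = ((i : ℕ) + 1) % N
  · simp only [MV, Matrix.of_apply, if_pos hij]
    rw [hij, pow_mod_eq ht, pow_succ]
    ring
  · simp [MV, hij]

lemma conj_of_comm {N : ℕ} {P A B : Matrix (Fin N) (Fin N) ℂ} (hP : IsUnit P.det)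
    (h : P * A = B * P) : P * A * P⁻¹ = B := by
  rw [h, Matrix.mul_assoc, Matrix.mul_nonsing_inv _ hP, Matrix.mul_one]

lemma comm_of_conj {N : ℕ} {P A B : Matrix (Fin N) (Fin N) ℂ} (hP : IsUnit P.det)
    (h : P * A * P⁻¹ = B) : P * A = B * P := by
  have h2 : P * A * (P⁻¹ * P) = B * P := by rw [← Matrix.mul_assoc, h]
  rwa [Matrix.nonsing_inv_mul _ hP, Matrix.mul_one] at h2

lemma inv_comm {N : ℕ} {P A B : Matrix (Fin N) (Fin N) ℂ} (hA : IsUnit A.det)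
    (hB : IsUnit B.det) (h : P * A = B * P) : P * A⁻¹ = B⁻¹ * P := by
  have hP2 : P * A⁻¹ = B⁻¹ * (P * A) * A⁻¹ := by
    rw [h, ← Matrix.mul_assoc, Matrix.nonsing_inv_mul _ hB, Matrix.one_mul]
  rw [hP2, Matrix.mul_assoc B⁻¹, Matrix.mul_assoc P A, Matrix.mul_nonsing_inv _ hA,
    Matrix.mul_one]

/-- Two standard representations `χ_{u,v,h}` and `χ_{u′,v′,h′}` are conjugate if and only if
`u^N = u′^N`, `v^N = v′^N`, and `h = h′`. -/
theorem stmt5 (N : ℕ) (hN : Odd N) (hNpos : 0 < N) (q : ℂ) (hq : IsPrimitiveRoot q N)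
    (u v h u' v' h' : ℂ) (hu : u ≠ 0) (hv : v ≠ 0) (hh : h ≠ 0)
    (hu' : u' ≠ 0) (hv' : v' ≠ 0) (hh' : h' ≠ 0) :
    (∃ P : Matrix (Fin N) (Fin N) ℂ, IsUnit P ∧
      P * MU N q u * P⁻¹ = MU N q u' ∧
      P * MV N v * P⁻¹ = MV N v' ∧
      P * MW N q u v h * P⁻¹ = MW N q u' v' h') ↔
    (u ^ N = u' ^ N ∧ v ^ N = v' ^ N ∧ h = h') := by
  haveI : NeZero N := ⟨hNpos.ne'⟩
  have hq0 : q ≠ 0 := hq.ne_zero hNpos.ne'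
  have hq1 : q ^ N = 1 := hq.pow_eq_one
  have hUVdet : ∀ a b : ℂ, a ≠ 0 → b ≠ 0 → IsUnit (MU N q a * MV N b).det := by
    intro a b ha hb
    rw [Matrix.det_mul]
    exact (isUnit_det_MU hq0 ha).mul (isUnit_det_MV hNpos hb)
  have key : ∀ a b c : ℂ, a ≠ 0 → b ≠ 0 →
      MU N q a * MV N b * MW N q a b c = ((q ^ 2)⁻¹ * c) • (1 : Matrix (Fin N) (Fin N) ℂ) := by
    intro a b c ha hb
    rw [MW, Matrix.mul_smul, Matrix.mul_nonsing_inv _ (hUVdet a b ha hb)]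
  constructor
  · rintro ⟨P, hP, h1, h2, h3⟩
    have hPdet : IsUnit P.det := (Matrix.isUnit_iff_isUnit_det P).mp hP
    -- u^N = u'^N
    have hdetU : (MU N q u').det = (MU N q u).det := by rw [← h1, Matrix.det_conj hP]
    rw [det_MU, det_MU] at hdetU
    have hCne : (∏ i : Fin N, q ^ (4 * (i : ℕ))) ≠ 0 :=
      Finset.prod_ne_zero_iff.mpr fun i _ => pow_ne_zero _ hq0
    have huN : u ^ N = u' ^ N := (mul_right_cancel₀ hCne hdetU).symm
    -- v^N = v'^N
    have hdetV : (MV N v').det = (MV N v).det := by rw [← h2, Matrix.det_conj hP]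
    have hSdet : (MV N 1).det ≠ 0 := (isUnit_det_MV hNpos one_ne_zero).ne_zero
    have hMVdet : ∀ w : ℂ, (MV N w).det = w ^ N * (MV N 1).det := by
      intro w
      rw [MV_smul N w, Matrix.det_smul, Fintype.card_fin]
    rw [hMVdet v', hMVdet v] at hdetV
    have hvN : v ^ N = v' ^ N := (mul_right_cancel₀ hSdet hdetV).symm
    -- h = h'
    have c1 : P * MU N q u = MU N q u' * P := comm_of_conj hPdet h1
    have c2 : P * MV N v = MV N v' * P := comm_of_conj hPdet h2
    have c3 : P * MW N q u v h = MW N q u' v' h' * P := comm_of_conj hPdet h3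
    have hcomm : P * (MU N q u * MV N v * MW N q u v h)
        = MU N q u' * MV N v' * MW N q u' v' h' * P := by
      rw [← Matrix.mul_assoc, ← Matrix.mul_assoc, c1, Matrix.mul_assoc (MU N q u') P, c2,
        ← Matrix.mul_assoc, Matrix.mul_assoc _ P, c3, ← Matrix.mul_assoc]
    rw [key u v h hu hv, key u' v' h' hu' hv'] at hcomm
    rw [Matrix.mul_smul, Matrix.mul_one, Matrix.smul_mul, Matrix.one_mul] at hcomm
    have h4 : ((q ^ 2)⁻¹ * h) • (P * P⁻¹) = ((q ^ 2)⁻¹ * h') • (P * P⁻¹) := by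
      rw [← Matrix.smul_mul, ← Matrix.smul_mul, hcomm]
    rw [Matrix.mul_nonsing_inv _ hPdet] at h4
    have h5 : (((q ^ 2)⁻¹ * h) • (1 : Matrix (Fin N) (Fin N) ℂ)) ⟨0, hNpos⟩ ⟨0, hNpos⟩
        = (((q ^ 2)⁻¹ * h') • (1 : Matrix (Fin N) (Fin N) ℂ)) ⟨0, hNpos⟩ ⟨0, hNpos⟩ := by
      rw [h4]
    simp only [Matrix.smul_apply, Matrix.one_apply_eq, smul_eq_mul, mul_one] at h5
    exact ⟨huN, hvN, mul_left_cancel₀ (inv_ne_zero (pow_ne_zero 2 hq0)) h5⟩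
  · rintro ⟨huN, hvN, rfl⟩
    set t := v * v'⁻¹ with htdef
    have htne : t ≠ 0 := mul_ne_zero hv (inv_ne_zero hv')
    have ht : t ^ N = 1 := by
      rw [htdef, mul_pow, inv_pow, hvN, mul_inv_cancel₀ (pow_ne_zero _ hv')]
    have hcop : Nat.Coprime 4 N := by
      have h2 : Nat.Coprime 2 N := Nat.coprime_two_left.mpr hN
      exact (show (4 : ℕ) = 2 ^ 2 from rfl) ▸ Nat.Coprime.pow_left 2 h2
    have hq4 : IsPrimitiveRoot (q ^ 4) N := hq.pow_of_coprime 4 hcop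
    have hz : (u' * u⁻¹) ^ N = 1 := by
      rw [mul_pow, inv_pow, ← huN, mul_inv_cancel₀ (pow_ne_zero _ hu)]
    obtain ⟨k, -, hk⟩ := hq4.eq_pow_of_pow_eq_one hz
    have hk' : u * (q ^ 4) ^ k = u' := by rw [hk]; field_simp
    set D := Matrix.diagonal (fun i : Fin N => t ^ (i : ℕ)) with hD
    set S := MV N 1 with hS
    have hDdet : IsUnit D.det := by
      rw [hD, Matrix.det_diagonal, isUnit_iff_ne_zero]
      exact Finset.prod_ne_zero_iff.mpr fun i _ => pow_ne_zero _ htne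
    have hSdet : IsUnit S.det := isUnit_det_MV hNpos one_ne_zero
    have hPdet : IsUnit (D * S ^ k).det := by
      rw [Matrix.det_mul, Matrix.det_pow]
      exact hDdet.mul (hSdet.pow k)
    have hvv : v' * t = v := by rw [htdef]; field_simp
    have hPU : D * S ^ k * MU N q u = MU N q u' * (D * S ^ k) := by
      rw [Matrix.mul_assoc, hS, Spow_mul_MU hNpos hq1, ← Matrix.mul_assoc, ← hS, hD,
        D_mul_MU, ← hD, hk', Matrix.mul_assoc]
    have hPV : D * S ^ k * MV N v = MV N v' * (D * S ^ k) := by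
      rw [Matrix.mul_assoc, hS, Spow_mul_MV, ← Matrix.mul_assoc, ← hS,
        show MV N v = MV N (v' * t) by rw [hvv], hD, D_mul_MV ht, ← hD, Matrix.mul_assoc]
    have hPUV : D * S ^ k * (MU N q u * MV N v) = MU N q u' * MV N v' * (D * S ^ k) := by
      rw [← Matrix.mul_assoc, hPU, Matrix.mul_assoc, hPV, ← Matrix.mul_assoc]
    have hPW : D * S ^ k * MW N q u v h = MW N q u' v' h * (D * S ^ k) := by
      rw [MW, MW, Matrix.mul_smul, Matrix.smul_mul,
        inv_comm (hUVdet u v hu hv) (hUVdet u' v' hu' hv') hPUV]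
    exact ⟨D * S ^ k, (Matrix.isUnit_iff_isUnit_det _).mpr hPdet,
      conj_of_comm hPdet hPU, conj_of_comm hPdet hPV, conj_of_comm hPdet hPW⟩
end

section
/- With N, q, and the matrices M_U, M_V, M_W as in the context, let u, v, h be nonzero complex numbers with u^N ≠ −1 (so that the diagonal matrices 1 + q·M_U(u), 1 + q³·M_U(u), 1 + q·M_U(u)⁻¹, and 1 + q³·M_U(u)⁻¹ are all invertible). Define R_U := (1 + q·M_U(u)⁻¹)⁻¹·(1 + q³·M_U(u)⁻¹)⁻¹·M_W(u,v,h), R_V := (1 + q·M_U(u))·(1 + q³·M_U(u))·M_V(v), and R_W := M_U(u)⁻¹. Then R_V·R_U = q⁴·R_U·R_V, R_W·R_V = q⁴·R_V·R_W, R_U·R_W = q⁴·R_W·R_U, and q²·R_U·R_V·R_W = h·I, where I is the N×N identity matrix. -/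
/-!
Let `P` be the permutation matrix of the cyclic shift `i ↦ i + 1` and `d i = u q^{4i}` the
diagonal of `M_U`, so that `d (i + 1) = q⁴ d i` because `q^N = 1`. All three matrices are
weighted shifts: `R_W = diag(d⁻¹)`, `R_V = diag(g) P` and `R_U = diag(w) P⁻¹`. Since
`P · diag f = diag (f (· + 1)) · P`, every product of two of them is a weighted shift again, and
the relations reduce to `d (i + 1) = q⁴ d i` together with the scalar identity
`g i · w (i + 1) = q² h · d i`. The latter follows from `(1 + y)(1 + y⁻¹)⁻¹ = y`, applied to
`y = q d i` and `y = q³ d i`. Since `N` is odd and `u^N ≠ -1`, no `1 + ζ d i^{±1}` with `ζ^N = 1`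
vanishes, so every inverse that occurs is a genuine one.
-/

open Matrix

namespace Matrix

variable {n R : Type*} [DecidableEq n]

theorem one_add_smul_diagonal [CommSemiring R] (c : R) (d : n → R) :
    1 + c • diagonal d = diagonal (fun i => 1 + c * d i) := by
  rw [← diagonal_one, ← diagonal_smul, diagonal_add]
  rfl

variable [Fintype n]

theorem permMatrix_mul_diagonal [NonAssocSemiring R] (σ : Equiv.Perm n) (f : n → R) :
    σ.permMatrix R * diagonal f = diagonal (f ∘ σ) * σ.permMatrix R := by
  ext i j
  simp only [mul_diagonal, diagonal_mul, Function.comp_apply, Equiv.Perm.permMatrix,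
    PEquiv.toMatrix_apply, Equiv.toPEquiv_apply, Option.mem_def, Option.some.injEq]
  split_ifs with h <;> simp [h]

theorem permMatrix_mul_permMatrix_inv [NonAssocSemiring R] (σ : Equiv.Perm n) :
    σ.permMatrix R * σ⁻¹.permMatrix R = 1 := by
  rw [← permMatrix_mul, inv_mul_cancel, permMatrix_one]

theorem permMatrix_inv_mul_permMatrix [NonAssocSemiring R] (σ : Equiv.Perm n) :
    σ⁻¹.permMatrix R * σ.permMatrix R = 1 := by
  simpa using permMatrix_mul_permMatrix_inv (R := R) σ⁻¹

theorem inv_permMatrix [CommRing R] (σ : Equiv.Perm n) :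
    (σ.permMatrix R)⁻¹ = σ⁻¹.permMatrix R :=
  inv_eq_right_inv (permMatrix_mul_permMatrix_inv σ)

theorem diagonal_mul_permMatrix_mul_diagonal [Semiring R] (σ : Equiv.Perm n)
    (f g : n → R) :
    diagonal f * σ.permMatrix R * diagonal g =
      diagonal (fun i => f i * g (σ i)) * σ.permMatrix R := by
  rw [Matrix.mul_assoc, permMatrix_mul_diagonal, ← Matrix.mul_assoc, diagonal_mul_diagonal]
  rfl

theorem inv_diagonal_of_ne_zero {K : Type*} [Field K] {d : n → K} (hd : ∀ i, d i ≠ 0) :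
    (diagonal d)⁻¹ = diagonal (fun i => (d i)⁻¹) :=
  inv_eq_right_inv <| by
    rw [diagonal_mul_diagonal, ← diagonal_one]
    exact congrArg diagonal (funext fun i => mul_inv_cancel₀ (hd i))

end Matrix

theorem one_add_mul_ne_zero_of_pow_ne_neg_one {R : Type*} [CommRing R] {N : ℕ} (hN : Odd N)
    {ζ x : R} (hζ : ζ ^ N = 1) (hx : x ^ N ≠ -1) : 1 + ζ * x ≠ 0 := by
  intro h
  apply hx
  calc x ^ N = (ζ * x) ^ N := by rw [mul_pow, hζ, one_mul]
    _ = -1 := by rw [eq_neg_of_add_eq_zero_right h, hN.neg_one_pow]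

theorem one_add_mul_inv_one_add_inv {K : Type*} [Field K] {y : K} (hy : y ≠ 0)
    (hy1 : 1 + y ≠ 0) : (1 + y) * (1 + y⁻¹)⁻¹ = y := by
  rw [show 1 + y⁻¹ = (1 + y) / y by field_simp; ring]
  field_simp

theorem diagonal_exchange_scalar_identity {K : Type*} [Field K] {q e : K} (hq : q ≠ 0)
    (he : e ≠ 0) (h1 : 1 + q * e ≠ 0) (h3 : 1 + q ^ 3 * e ≠ 0) :
    (1 + q * e) * (1 + q ^ 3 * e) *
        ((1 + q * (q ^ 4 * e)⁻¹)⁻¹ * (1 + q ^ 3 * (q ^ 4 * e)⁻¹)⁻¹) =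
      q ^ 4 * e ^ 2 := by
  have hq1 : q * (q ^ 4 * e)⁻¹ = (q ^ 3 * e)⁻¹ := by field_simp
  have hq3 : q ^ 3 * (q ^ 4 * e)⁻¹ = (q * e)⁻¹ := by field_simp
  calc _ = ((1 + q * e) * (1 + (q * e)⁻¹)⁻¹) *
        ((1 + q ^ 3 * e) * (1 + (q ^ 3 * e)⁻¹)⁻¹) := by rw [hq1, hq3]; ring
    _ = (q * e) * (q ^ 3 * e) := by
        rw [one_add_mul_inv_one_add_inv (by positivity) h1,
          one_add_mul_inv_one_add_inv (by positivity) h3]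
    _ = q ^ 4 * e ^ 2 := by ring

section WeightedShift

variable {n K : Type*} [Fintype n] [DecidableEq n] [Field K]

theorem weighted_shift_relations (σ : Equiv.Perm n) {t c : K} {d g w : n → K}
    (hd : ∀ i, d i ≠ 0) (hdσ : ∀ i, d (σ i) = t * d i)
    (hgw : ∀ i, g i * w (σ i) = t * c * d i) :
    diagonal g * σ.permMatrix K * (diagonal w * σ⁻¹.permMatrix K) =
        t • (diagonal w * σ⁻¹.permMatrix K * (diagonal g * σ.permMatrix K)) ∧
      diagonal (fun i => (d i)⁻¹) * (diagonal g * σ.permMatrix K) =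
        t • (diagonal g * σ.permMatrix K * diagonal (fun i => (d i)⁻¹)) ∧
      diagonal w * σ⁻¹.permMatrix K * diagonal (fun i => (d i)⁻¹) =
        t • (diagonal (fun i => (d i)⁻¹) * (diagonal w * σ⁻¹.permMatrix K)) ∧
      diagonal w * σ⁻¹.permMatrix K * (diagonal g * σ.permMatrix K) *
          diagonal (fun i => (d i)⁻¹) = c • 1 := by
  have hdσinv : ∀ i, d i = t * d (σ⁻¹ i) := fun i => by
    simpa using hdσ (σ⁻¹ i)
  have hYX : diagonal g * σ.permMatrix K * (diagonal w * σ⁻¹.permMatrix K) =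
      diagonal (fun i => t * c * d i) := by
    rw [← Matrix.mul_assoc, diagonal_mul_permMatrix_mul_diagonal, Matrix.mul_assoc,
      permMatrix_mul_permMatrix_inv, Matrix.mul_one]
    exact congrArg diagonal (funext hgw)
  have hXY : diagonal w * σ⁻¹.permMatrix K * (diagonal g * σ.permMatrix K) =
      diagonal (fun i => c * d i) := by
    rw [← Matrix.mul_assoc, diagonal_mul_permMatrix_mul_diagonal, Matrix.mul_assoc,
      permMatrix_inv_mul_permMatrix, Matrix.mul_one]
    refine congrArg diagonal (funext fun i => ?_)
    have h : g (σ⁻¹ i) * w i = t * c * d (σ⁻¹ i) := by simpa using hgw (σ⁻¹ i)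
    rw [hdσinv i]
    linear_combination h
  refine ⟨?_, ?_, ?_, ?_⟩
  · rw [hYX, hXY, ← diagonal_smul]
    exact congrArg diagonal (funext fun i => by simp [mul_assoc])
  · rw [← Matrix.mul_assoc, diagonal_mul_diagonal, diagonal_mul_permMatrix_mul_diagonal,
      ← smul_mul, ← diagonal_smul]
    refine congrArg (diagonal · * _) (funext fun i => ?_)
    have ht : t ≠ 0 := left_ne_zero_of_mul (hdσ i ▸ hd (σ i))
    simp only [Pi.smul_apply, hdσ, smul_eq_mul]
    field_simp [hd i]
  · rw [diagonal_mul_permMatrix_mul_diagonal, ← Matrix.mul_assoc, diagonal_mul_diagonal,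
      ← smul_mul, ← diagonal_smul]
    refine congrArg (diagonal · * _) (funext fun i => ?_)
    have hdi : d (σ⁻¹ i) ≠ 0 := hd _
    have ht : t ≠ 0 := left_ne_zero_of_mul (hdσinv i ▸ hd i)
    simp only [Pi.smul_apply, hdσinv i, smul_eq_mul]
    field_simp
  · rw [hXY, diagonal_mul_diagonal, ← diagonal_one, ← diagonal_smul]
    refine congrArg diagonal (funext fun i => ?_)
    simp only [Pi.smul_apply, smul_eq_mul]
    field_simp [hd i]

end WeightedShift

section ChekhovFock

noncomputable def MUEntry (N : ℕ) (q u : ℂ) (i : Fin N) : ℂ := u * q ^ (4 * (i : ℕ))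

noncomputable def RVEntry (N : ℕ) (q u v : ℂ) (i : Fin N) : ℂ :=
  (1 + q * MUEntry N q u i) * (1 + q ^ 3 * MUEntry N q u i) * v

noncomputable def RUEntry (N : ℕ) [NeZero N] (q u v h : ℂ) (i : Fin N) : ℂ :=
  (1 + q * (MUEntry N q u i)⁻¹)⁻¹ * (1 + q ^ 3 * (MUEntry N q u i)⁻¹)⁻¹ *
    ((q ^ 2)⁻¹ * h * (MUEntry N q u (i - 1) * v)⁻¹)

variable {N : ℕ} {q u v : ℂ}

theorem MU_eq_diagonal : MU N q u = diagonal (MUEntry N q u) := rfl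

theorem MUEntry_ne_zero (hq : q ≠ 0) (hu : u ≠ 0) (i : Fin N) : MUEntry N q u i ≠ 0 :=
  mul_ne_zero hu (pow_ne_zero _ hq)

theorem MUEntry_pow (hq : q ^ N = 1) (i : Fin N) : MUEntry N q u i ^ N = u ^ N := by
  rw [MUEntry, mul_pow, pow_right_comm, hq, one_pow, mul_one]

theorem one_add_mul_MUEntry_ne_zero (hN : Odd N) {ζ : ℂ} (hζ : ζ ^ N = 1) (hq : q ^ N = 1)
    (hun : u ^ N ≠ -1) (i : Fin N) : 1 + ζ * MUEntry N q u i ≠ 0 :=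
  one_add_mul_ne_zero_of_pow_ne_neg_one hN hζ (by rwa [MUEntry_pow hq])

theorem one_add_mul_MUEntry_inv_ne_zero (hN : Odd N) {ζ : ℂ} (hζ : ζ ^ N = 1) (hq : q ^ N = 1)
    (hun : u ^ N ≠ -1) (i : Fin N) : 1 + ζ * (MUEntry N q u i)⁻¹ ≠ 0 :=
  one_add_mul_ne_zero_of_pow_ne_neg_one hN hζ <| by
    rwa [inv_pow, MUEntry_pow hq, Ne, inv_eq_iff_eq_inv, inv_neg, inv_one]

theorem MU_inv_eq (hq : q ≠ 0) (hu : u ≠ 0) :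
    (MU N q u)⁻¹ = diagonal (fun i => (MUEntry N q u i)⁻¹) :=
  inv_diagonal_of_ne_zero (MUEntry_ne_zero hq hu)

variable [NeZero N]

theorem MUEntry_add_one (hq : q ^ N = 1) (i : Fin N) :
    MUEntry N q u (i + 1) = q ^ 4 * MUEntry N q u i := by
  have hq4 : (q ^ 4) ^ N = 1 := by rw [pow_right_comm, hq, one_pow]
  simp only [MUEntry, Fin.val_add, Fin.val_one', Nat.add_mod_mod, pow_mul,
    ← pow_eq_pow_mod _ hq4]
  ring

theorem MV_eq : MV N v = diagonal (fun _ => v) * (Equiv.addRight 1).permMatrix ℂ := by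
  ext i j
  simp only [MV, of_apply, diagonal_mul, Equiv.Perm.permMatrix, PEquiv.toMatrix_apply,
    Equiv.toPEquiv_apply, Option.mem_def, Option.some.injEq, Equiv.coe_addRight, Fin.ext_iff,
    Fin.val_add, Fin.val_one', Nat.add_mod_mod, eq_comm (a := (j : ℕ))]
  split_ifs <;> simp

theorem MW_eq (hq : q ≠ 0) (hu : u ≠ 0) (hv : v ≠ 0) (h : ℂ) :
    MW N q u v h = diagonal (fun i => (q ^ 2)⁻¹ * h * (MUEntry N q u (i - 1) * v)⁻¹) *
      (Equiv.addRight 1)⁻¹.permMatrix ℂ := by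
  have hd : ∀ i, MUEntry N q u i * v ≠ 0 := fun i => mul_ne_zero (MUEntry_ne_zero hq hu i) hv
  rw [MW, MU_eq_diagonal, MV_eq, ← Matrix.mul_assoc, diagonal_mul_diagonal, Matrix.mul_inv_rev,
    inv_permMatrix, inv_diagonal_of_ne_zero hd, permMatrix_mul_diagonal, ← smul_mul,
    ← diagonal_smul]
  refine congrArg (diagonal · * _) (funext fun i => ?_)
  simp [sub_eq_add_neg, Equiv.Perm.inv_def]

theorem RV_eq : (1 + q • MU N q u) * (1 + q ^ 3 • MU N q u) * MV N v =
    diagonal (RVEntry N q u v) * (Equiv.addRight 1).permMatrix ℂ := by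
  rw [MU_eq_diagonal, one_add_smul_diagonal, one_add_smul_diagonal, MV_eq, diagonal_mul_diagonal,
    ← Matrix.mul_assoc, diagonal_mul_diagonal]
  rfl

theorem RU_eq (hN : Odd N) (hq : q ^ N = 1) (hq0 : q ≠ 0) (hu : u ≠ 0) (hv : v ≠ 0)
    (hun : u ^ N ≠ -1) (h : ℂ) :
    (1 + q • (MU N q u)⁻¹)⁻¹ * (1 + q ^ 3 • (MU N q u)⁻¹)⁻¹ * MW N q u v h =
      diagonal (RUEntry N q u v h) * (Equiv.addRight 1)⁻¹.permMatrix ℂ := by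
  have hq3 : (q ^ 3) ^ N = 1 := by rw [pow_right_comm, hq, one_pow]
  rw [MU_inv_eq hq0 hu, one_add_smul_diagonal, one_add_smul_diagonal,
    inv_diagonal_of_ne_zero (one_add_mul_MUEntry_inv_ne_zero hN hq hq hun),
    inv_diagonal_of_ne_zero (one_add_mul_MUEntry_inv_ne_zero hN hq3 hq hun),
    MW_eq hq0 hu hv, diagonal_mul_diagonal, ← Matrix.mul_assoc, diagonal_mul_diagonal]
  rfl

theorem RVEntry_mul_RUEntry_add_one (hN : Odd N) (hq : q ^ N = 1) (hq0 : q ≠ 0) (hu : u ≠ 0)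
    (hv : v ≠ 0) (hun : u ^ N ≠ -1) (h : ℂ) (i : Fin N) :
    RVEntry N q u v i * RUEntry N q u v h (i + 1) =
      q ^ 4 * ((q ^ 2)⁻¹ * h) * MUEntry N q u i := by
  have hq3 : (q ^ 3) ^ N = 1 := by rw [pow_right_comm, hq, one_pow]
  have he := MUEntry_ne_zero (N := N) hq0 hu i
  have key := diagonal_exchange_scalar_identity hq0 he
    (one_add_mul_MUEntry_ne_zero hN hq hq hun i) (one_add_mul_MUEntry_ne_zero hN hq3 hq hun i)
  rw [RVEntry, RUEntry, add_sub_cancel_right, MUEntry_add_one hq]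
  set e := MUEntry N q u i
  calc _ = (1 + q * e) * (1 + q ^ 3 * e) *
        ((1 + q * (q ^ 4 * e)⁻¹)⁻¹ * (1 + q ^ 3 * (q ^ 4 * e)⁻¹)⁻¹) *
          ((q ^ 2)⁻¹ * h) * e⁻¹ * (v * v⁻¹) := by rw [mul_inv]; ring
    _ = q ^ 4 * e ^ 2 * ((q ^ 2)⁻¹ * h) * e⁻¹ := by rw [key, mul_inv_cancel₀ hv, mul_one]
    _ = _ := by field_simp

end ChekhovFock

theorem stmt6_general (N : ℕ) (hN : Odd N) (hNpos : 0 < N) (q : ℂ) (hq : IsPrimitiveRoot q N)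
    (u v h : ℂ) (hu : u ≠ 0) (hv : v ≠ 0) (hun : u ^ N ≠ -1)
    (RU RV RW : Matrix (Fin N) (Fin N) ℂ)
    (hRU : RU = (1 + q • (MU N q u)⁻¹)⁻¹ * (1 + q ^ 3 • (MU N q u)⁻¹)⁻¹ * MW N q u v h)
    (hRV : RV = (1 + q • MU N q u) * (1 + q ^ 3 • MU N q u) * MV N v)
    (hRW : RW = (MU N q u)⁻¹) :
    RV * RU = q ^ 4 • (RU * RV) ∧
    RW * RV = q ^ 4 • (RV * RW) ∧
    RU * RW = q ^ 4 • (RW * RU) ∧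
    q ^ 2 • (RU * RV * RW) = h • (1 : Matrix (Fin N) (Fin N) ℂ) := by
  have : NeZero N := ⟨hNpos.ne'⟩
  have hqN : q ^ N = 1 := hq.pow_eq_one
  have hq0 : q ≠ 0 := hq.ne_zero hNpos.ne'
  obtain ⟨hVU, hWV, hUW, hUVW⟩ := weighted_shift_relations (Equiv.addRight 1)
    (g := RVEntry N q u v) (w := RUEntry N q u v h) (MUEntry_ne_zero hq0 hu) (MUEntry_add_one hqN)
    (RVEntry_mul_RUEntry_add_one hN hqN hq0 hu hv hun h)
  rw [hRU, hRV, hRW, RU_eq hN hqN hq0 hu hv hun, RV_eq, MU_inv_eq hq0 hu]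
  refine ⟨hVU, hWV, hUW, ?_⟩
  rw [hUVW, smul_smul, mul_inv_cancel_left₀ (pow_ne_zero 2 hq0)]

/-- The images `R_U, R_V, R_W` of `U, V, W` under `χ_{u,v,h} ∘ ℛ` again satisfy the
Chekhov–Fock relations, with the same central element `q²·R_U·R_V·R_W = h`. -/
theorem stmt6 (N : ℕ) (hN : Odd N) (hNpos : 0 < N) (q : ℂ) (hq : IsPrimitiveRoot q N)
    (u v h : ℂ) (hu : u ≠ 0) (hv : v ≠ 0) (hh : h ≠ 0) (hun : u ^ N ≠ -1)
    (RU RV RW : Matrix (Fin N) (Fin N) ℂ)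
    (hRU : RU = (1 + q • (MU N q u)⁻¹)⁻¹ * (1 + q ^ 3 • (MU N q u)⁻¹)⁻¹ * MW N q u v h)
    (hRV : RV = (1 + q • MU N q u) * (1 + q ^ 3 • MU N q u) * MV N v)
    (hRW : RW = (MU N q u)⁻¹) :
    RV * RU = q ^ 4 • (RU * RV) ∧
    RW * RV = q ^ 4 • (RV * RW) ∧
    RU * RW = q ^ 4 • (RW * RU) ∧
    q ^ 2 • (RU * RV * RW) = h • (1 : Matrix (Fin N) (Fin N) ℂ) :=
  stmt6_general N hN hNpos q hq u v h hu hv hun RU RV RW hRU hRV hRW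
end

section
/- With N, q, and the matrices M_U, M_V, M_W as in the context, let u, v, h be nonzero complex numbers with u^N ≠ −1, and define R_U := (1 + q·M_U(u)⁻¹)⁻¹·(1 + q³·M_U(u)⁻¹)⁻¹·M_W(u,v,h), R_V := (1 + q·M_U(u))·(1 + q³·M_U(u))·M_V(v), and R_W := M_U(u)⁻¹. Then (R_U)^N = (h^N / (u^N·v^N·(1 + u^{−N})²))·I, (R_V)^N = (1 + u^N)²·v^N·I, and (R_W)^N = u^{−N}·I, where I is the N×N identity matrix. -/
open Matrix

/-! `R_W` is diagonal, `R_V` is a diagonal matrix `D` times the cyclic shift `M_V(v)`, and `R_U`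
is a scalar times the inverse of such a product. Here `(D · M_V(v))^N` is the scalar
`(∏ᵢ Dᵢᵢ) · v^N`, since commuting `M_V` past a diagonal matrix shifts its entries cyclically.
The diagonal entries of `M_U(u)` are `u ζ^i` with `ζ = q^4`, a primitive `N`-th root of unity
because `N` is odd, so the products are evaluated by `∏ᵢ (1 + ζ^i x) = 1 + x^N`. -/

open Finset

theorem IsPrimitiveRoot.prod_range_one_add_pow_mul {R : Type*} [CommRing R] [IsDomain R]
    {ζ : R} {n : ℕ} (hζ : IsPrimitiveRoot ζ n) (hn : Odd n) (x : R) :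
    ∏ i ∈ range n, (1 + ζ ^ i * x) = 1 + x ^ n := by
  have h := congr_arg (Polynomial.eval 1) (X_pow_sub_C_eq_prod hζ hn.pos (hn.neg_pow x))
  simpa [Polynomial.eval_prod, sub_eq_add_neg] using h.symm

theorem Matrix.inv_smul_one {n K : Type*} [Fintype n] [DecidableEq n] [Nonempty n] [Field K]
    (c : K) : (c • (1 : Matrix n n K))⁻¹ = c⁻¹ • 1 := by
  rcases eq_or_ne c 0 with rfl | hc
  · simp
  · simpa [Units.smul_def] using inv_smul' (1 : Matrix n n K) (Units.mk0 c hc) (by simp)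

theorem Matrix.inv_pow_of_pow_eq_smul_one {n K : Type*} [Fintype n] [DecidableEq n] [Nonempty n]
    [Field K] {A : Matrix n n K} {k : ℕ} {c : K} (hA : A ^ k = c • 1) : A⁻¹ ^ k = c⁻¹ • 1 := by
  rw [inv_pow', hA, inv_smul_one]

theorem mul_pow_eq_of_pow_eq_one {M : Type*} [CommMonoid M] {ζ : M} {n : ℕ} (hζ : ζ ^ n = 1)
    (x : M) : (ζ * x) ^ n = x ^ n := by
  rw [mul_pow, hζ, one_mul]

theorem Matrix.one_add_smul_diagonal_s7 {n R : Type*} [DecidableEq n] [Semiring R] (c : R)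
    (d : n → R) : 1 + c • diagonal d = diagonal fun i => 1 + c * d i := by
  rw [← diagonal_one, ← diagonal_smul, diagonal_add]
  rfl

section CyclicShift

open Fin.NatCast

variable {N : ℕ} [NeZero N]

theorem MV_apply (v : ℂ) (i j : Fin N) : MV N v i j = if j = i + 1 then v else 0 := by
  have hc : j = i + 1 ↔ (j : ℕ) = ((i : ℕ) + 1) % N := by
    rw [Fin.ext_iff, Fin.val_add, Fin.val_one', Nat.add_mod_mod]
  simp only [MV, of_apply, hc]

theorem diagonal_mul_MV_mul_diagonal (d g : Fin N → ℂ) (v : ℂ) :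
    diagonal d * MV N v * diagonal g = diagonal (fun i => d i * g (i + 1)) * MV N v := by
  ext i j
  simp only [mul_diagonal, diagonal_mul, MV_apply]
  split_ifs with h
  · rw [h]; ring
  · ring

theorem diagonal_mul_MV_pow (d : Fin N → ℂ) (v : ℂ) (k : ℕ) :
    (diagonal d * MV N v) ^ k =
      of fun i j : Fin N => if j = i + (k : Fin N) then (∏ t ∈ range k, d (i + (t : Fin N))) * v ^ k
        else 0 := by
  induction k with
  | zero =>
    ext i j
    simp [one_apply, eq_comm]
  | succ k ih =>
    ext i j
    rw [pow_succ, ih, mul_apply]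
    simp only [of_apply, diagonal_mul, ite_mul, zero_mul, sum_ite_eq', mem_univ, if_true,
      MV_apply]
    rw [Nat.cast_succ, ← add_assoc, prod_range_succ]
    split_ifs <;> ring

theorem diagonal_mul_MV_pow_self (d : Fin N → ℂ) (v : ℂ) :
    (diagonal d * MV N v) ^ N = ((∏ i, d i) * v ^ N) • (1 : Matrix (Fin N) (Fin N) ℂ) := by
  have hprod (i : Fin N) : ∏ t ∈ range N, d (i + t) = ∏ t, d t := by
    rw [← Fin.prod_univ_eq_prod_range (fun t => d (i + t))]
    simp only [Fin.cast_val_eq_self]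
    exact Equiv.prod_comp (Equiv.addLeft i) d
  ext i j
  simp [diagonal_mul_MV_pow, hprod, one_apply, eq_comm]

end CyclicShift

section StandardRepresentation

variable {N : ℕ} {q : ℂ}

theorem MU_inv (hq : q ≠ 0) {u : ℂ} (hu : u ≠ 0) :
    (MU N q u)⁻¹ = diagonal fun i : Fin N => (u * q ^ (4 * (i : ℕ)))⁻¹ := by
  refine inv_eq_right_inv ?_
  rw [MU, diagonal_mul_diagonal, ← diagonal_one]
  congr 1
  ext i
  exact mul_inv_cancel₀ (mul_ne_zero hu (pow_ne_zero _ hq))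

theorem MU_pow_self (hq : q ^ N = 1) (u : ℂ) : MU N q u ^ N = u ^ N • 1 := by
  rw [MU, diagonal_pow, smul_one_eq_diagonal]
  congr 1
  ext i
  rw [Pi.pow_apply, mul_pow, pow_right_comm, hq, one_pow, mul_one]

theorem prod_MU_entries (hq : q ^ N = 1) (u : ℂ) : ∏ i : Fin N, u * q ^ (4 * (i : ℕ)) = u ^ N := by
  rw [prod_mul_distrib, prod_const, card_univ, Fintype.card_fin, prod_pow_eq_pow_sum,
    ← mul_sum, Fin.sum_univ_eq_sum_range (fun i => i) N]
  have hsum : 4 * ∑ i ∈ range N, i = N * (2 * (N - 1)) := by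
    rw [show 4 * ∑ i ∈ range N, i = 2 * ((∑ i ∈ range N, i) * 2) by ring,
      sum_range_id_mul_two]
    ring
  rw [hsum, pow_mul, hq, one_pow, mul_one]

theorem IsPrimitiveRoot.pow_four_of_odd (hN : Odd N) (hq : IsPrimitiveRoot q N) :
    IsPrimitiveRoot (q ^ 4) N :=
  hq.pow_of_coprime 4 (by simpa using (Nat.coprime_two_left.mpr hN).pow_left 2)

theorem prod_one_add_mul_MU_entries (hN : Odd N) (hq : IsPrimitiveRoot q N) (c u : ℂ) :
    ∏ i : Fin N, (1 + c * (u * q ^ (4 * (i : ℕ)))) = 1 + (c * u) ^ N := by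
  rw [← (hq.pow_four_of_odd hN).prod_range_one_add_pow_mul hN, ← Fin.prod_univ_eq_prod_range]
  simp only [pow_mul]
  ring_nf

theorem prod_one_add_mul_MU_inv_entries (hN : Odd N) (hq : IsPrimitiveRoot q N) (c u : ℂ) :
    ∏ i : Fin N, (1 + c * (u * q ^ (4 * (i : ℕ)))⁻¹) = 1 + (c * u⁻¹) ^ N := by
  rw [← (hq.pow_four_of_odd hN).inv.prod_range_one_add_pow_mul hN, ← Fin.prod_univ_eq_prod_range]
  simp only [pow_mul, mul_inv, inv_pow]
  ring_nf

theorem MU_inv_pow_self [NeZero N] (hq : q ^ N = 1) (u : ℂ) :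
    (MU N q u)⁻¹ ^ N = (u ^ N)⁻¹ • 1 :=
  inv_pow_of_pow_eq_smul_one (MU_pow_self hq u)

theorem chiR_V_pow (hN : Odd N) (hq : IsPrimitiveRoot q N) (u v : ℂ) :
    ((1 + q • MU N q u) * (1 + q ^ 3 • MU N q u) * MV N v) ^ N = ((1 + u ^ N) ^ 2 * v ^ N) • 1 := by
  have : NeZero N := ⟨hN.pos.ne'⟩
  have hq3 : (q ^ 3) ^ N = 1 := by rw [pow_right_comm, hq.pow_eq_one, one_pow]
  rw [MU, one_add_smul_diagonal_s7, one_add_smul_diagonal_s7, diagonal_mul_diagonal,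
    diagonal_mul_MV_pow_self, prod_mul_distrib, prod_one_add_mul_MU_entries hN hq,
    prod_one_add_mul_MU_entries hN hq, mul_pow_eq_of_pow_eq_one hq.pow_eq_one,
    mul_pow_eq_of_pow_eq_one hq3]
  ring_nf

theorem chiR_U_pow (hN : Odd N) (hq : IsPrimitiveRoot q N) {u : ℂ} (hu : u ≠ 0) (v h : ℂ) :
    ((1 + q • (MU N q u)⁻¹)⁻¹ * (1 + q ^ 3 • (MU N q u)⁻¹)⁻¹ * MW N q u v h) ^ N =
      (h ^ N / (u ^ N * v ^ N * (1 + (u ^ N)⁻¹) ^ 2)) • 1 := by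
  have : NeZero N := ⟨hN.pos.ne'⟩
  have hq3 : (q ^ 3) ^ N = 1 := by rw [pow_right_comm, hq.pow_eq_one, one_pow]
  let a : Fin N → ℂ := fun i => u * q ^ (4 * (i : ℕ))
  let g (c : ℂ) (i : Fin N) : ℂ := 1 + c * (a i)⁻¹
  let X := diagonal (fun i => a i * g (q ^ 3) (i + 1) * g q (i + 1)) * MV N v
  have hU : (1 + q • (MU N q u)⁻¹)⁻¹ * (1 + q ^ 3 • (MU N q u)⁻¹)⁻¹ * MW N q u v h =
      ((q ^ 2)⁻¹ * h) • X⁻¹ := by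
    have hX : MU N q u * MV N v * diagonal (g (q ^ 3)) * diagonal (g q) = X := by
      rw [MU, diagonal_mul_MV_mul_diagonal, diagonal_mul_MV_mul_diagonal]
    rw [MU_inv (hq.ne_zero hN.pos.ne') hu, one_add_smul_diagonal_s7, one_add_smul_diagonal_s7, MW, ← hX]
    simp only [Matrix.mul_inv_rev, Matrix.mul_smul, Matrix.mul_assoc]
    rfl
  have hXN : X ^ N = (u ^ N * (1 + (u ^ N)⁻¹) ^ 2 * v ^ N) • 1 := by
    have hshift (f : Fin N → ℂ) : ∏ i, f (i + 1) = ∏ i, f i := Equiv.prod_comp (Equiv.addRight 1) f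
    rw [diagonal_mul_MV_pow_self, prod_mul_distrib, prod_mul_distrib, hshift, hshift,
      prod_MU_entries hq.pow_eq_one, prod_one_add_mul_MU_inv_entries hN hq,
      prod_one_add_mul_MU_inv_entries hN hq, mul_pow_eq_of_pow_eq_one hq.pow_eq_one,
      mul_pow_eq_of_pow_eq_one hq3, inv_pow]
    ring_nf
  rw [hU, smul_pow, inv_pow_of_pow_eq_smul_one hXN, smul_smul, mul_pow, inv_pow, pow_right_comm,
    hq.pow_eq_one, one_pow, inv_one, one_mul, div_eq_mul_inv]
  ring_nf

end StandardRepresentation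

theorem stmt7_general (N : ℕ) (hN : Odd N) (q : ℂ) (hq : IsPrimitiveRoot q N)
    (u v h : ℂ) (hu : u ≠ 0)
    (RU RV RW : Matrix (Fin N) (Fin N) ℂ)
    (hRU : RU = (1 + q • (MU N q u)⁻¹)⁻¹ * (1 + q ^ 3 • (MU N q u)⁻¹)⁻¹ * MW N q u v h)
    (hRV : RV = (1 + q • MU N q u) * (1 + q ^ 3 • MU N q u) * MV N v)
    (hRW : RW = (MU N q u)⁻¹) :
    RU ^ N = (h ^ N / (u ^ N * v ^ N * (1 + (u ^ N)⁻¹) ^ 2)) • (1 : Matrix (Fin N) (Fin N) ℂ) ∧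
    RV ^ N = ((1 + u ^ N) ^ 2 * v ^ N) • (1 : Matrix (Fin N) (Fin N) ℂ) ∧
    RW ^ N = (u ^ N)⁻¹ • (1 : Matrix (Fin N) (Fin N) ℂ) := by
  have : NeZero N := ⟨hN.pos.ne'⟩
  subst hRU hRV hRW
  exact ⟨chiR_U_pow hN hq hu v h, chiR_V_pow hN hq u v, MU_inv_pow_self hq.pow_eq_one u⟩

/-- The `N`-th powers of the images `R_U, R_V, R_W` of `U, V, W` under `χ_{u,v,h} ∘ ℛ`
are the scalar matrices `h^N/(u^N v^N (1+u^{−N})²)`, `(1+u^N)² v^N`, and `u^{−N}`. -/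
theorem stmt7 (N : ℕ) (hN : Odd N) (hNpos : 0 < N) (q : ℂ) (hq : IsPrimitiveRoot q N)
    (u v h : ℂ) (hu : u ≠ 0) (hv : v ≠ 0) (hh : h ≠ 0) (hun : u ^ N ≠ -1)
    (RU RV RW : Matrix (Fin N) (Fin N) ℂ)
    (hRU : RU = (1 + q • (MU N q u)⁻¹)⁻¹ * (1 + q ^ 3 • (MU N q u)⁻¹)⁻¹ * MW N q u v h)
    (hRV : RV = (1 + q • MU N q u) * (1 + q ^ 3 • MU N q u) * MV N v)
    (hRW : RW = (MU N q u)⁻¹) :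
    RU ^ N = (h ^ N / (u ^ N * v ^ N * (1 + (u ^ N)⁻¹) ^ 2)) • (1 : Matrix (Fin N) (Fin N) ℂ) ∧
    RV ^ N = ((1 + u ^ N) ^ 2 * v ^ N) • (1 : Matrix (Fin N) (Fin N) ℂ) ∧
    RW ^ N = (u ^ N)⁻¹ • (1 : Matrix (Fin N) (Fin N) ℂ) :=
  stmt7_general N hN q hq u v h hu RU RV RW hRU hRV hRW
end

section
/- With N, q, and the matrix C_R = C_R(u,v,u′,v′,h) as in the context, suppose u, v, h, u′, v′ are nonzero complex numbers with u^N ≠ −1, (u′)^N = h^N / (u^N·v^N·(1 + u^{−N})²), and (v′)^N = (1 + u^N)²·v^N. Then the matrix C_R is invertible. -/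
open Matrix

/-- The intertwining matrix `C_R(u,v,u′,v′,h)`, with `(i,j)`-entry
`q^{2(j−i)²}·(u′v′/(uh))^{j−i}·(v′/v)^i·∏_{α=1}^{i}[(1+q^{4α−3}u)(1+q^{4α−1}u)]⁻¹`. -/
noncomputable def CR (N : ℕ) (q u v u' v' h : ℂ) : Matrix (Fin N) (Fin N) ℂ :=
  Matrix.of fun i j =>
    q ^ (2 * ((j : ℤ) - (i : ℤ)) ^ 2) *
      (u' * v' / (u * h)) ^ ((j : ℤ) - (i : ℤ)) *
      (v' / v) ^ (i : ℕ) *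
      ∏ α ∈ Finset.range (i : ℕ),
        ((1 + q ^ (4 * α + 1) * u) * (1 + q ^ (4 * α + 3) * u))⁻¹

/-! Since `2(j-i)² = 2i² - 4ij + 2j²`, the Gaussian matrix `(q^{2(j-i)²})` is a Vandermonde matrix
in the powers of `ω = q⁻⁴`, scaled by invertible diagonal matrices on both sides; for odd `N`, `ω` is
again a primitive `N`-th root of unity, so its powers are distinct. The factor `(u′v′/(uh))^{j-i}` and
the row factors of `C_R` are diagonal scalings too, and the factors `1 + q^m u` do not vanish because
`(q^m u)^N = u^N ≠ -1`. -/

theorem one_add_pow_mul_ne_zero {R : Type*} [CommRing R] {N : ℕ} {q u : R} (hN : Odd N)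
    (hq : q ^ N = 1) (hu : u ^ N ≠ -1) (m : ℕ) : 1 + q ^ m * u ≠ 0 := by
  intro h
  apply hu
  calc u ^ N = (q ^ m * u) ^ N := by
        rw [mul_pow, ← pow_mul, mul_comm m N, pow_mul, hq, one_pow, one_mul]
    _ = -1 := by rw [eq_neg_of_add_eq_zero_right h, hN.neg_one_pow]

section GaussMatrix

variable {K : Type*} [Field K]

theorem IsPrimitiveRoot.isUnit_vandermonde {n : ℕ} {ω : K} (hω : IsPrimitiveRoot ω n) :
    IsUnit (vandermonde fun i : Fin n => ω ^ (i : ℕ)) := by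
  rw [isUnit_iff_isUnit_det, isUnit_iff_ne_zero, det_vandermonde_ne_zero_iff]
  exact fun i j hij => Fin.ext (hω.pow_inj i.isLt j.isLt hij)

def gaussMatrix (n : ℕ) (q : K) : Matrix (Fin n) (Fin n) K :=
  of fun i j => q ^ (2 * ((j : ℤ) - i) ^ 2)

theorem gaussMatrix_eq_diagonal_mul_vandermonde_mul_diagonal {n : ℕ} {q : K} (hq : q ≠ 0) :
    gaussMatrix n q = diagonal (fun i : Fin n => q ^ (2 * (i : ℤ) ^ 2)) *
      vandermonde (fun i : Fin n => (q⁻¹ ^ 4) ^ (i : ℕ)) *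
      diagonal (fun j : Fin n => q ^ (2 * (j : ℤ) ^ 2)) := by
  ext i j
  simp only [gaussMatrix, of_apply, mul_diagonal, diagonal_mul, vandermonde_apply]
  rw [← pow_mul, ← pow_mul, inv_pow, ← zpow_natCast, ← _root_.zpow_neg, ← zpow_add₀ hq,
    ← zpow_add₀ hq]
  congr 1
  push_cast
  ring

theorem IsPrimitiveRoot.isUnit_gaussMatrix {n : ℕ} {q : K} (hq : IsPrimitiveRoot q n)
    (hn : Odd n) : IsUnit (gaussMatrix n q) := by
  have hq0 : q ≠ 0 := hq.ne_zero hn.pos.ne'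
  have hcop : Nat.Coprime 4 n := by
    simpa using (Nat.coprime_two_left.2 hn).pow_left 2
  have hdiag : IsUnit (diagonal fun i : Fin n => q ^ (2 * (i : ℤ) ^ 2)) :=
    isUnit_diagonal.2 (Pi.isUnit_iff.2 fun i => (zpow_ne_zero _ hq0).isUnit)
  rw [gaussMatrix_eq_diagonal_mul_vandermonde_mul_diagonal hq0]
  exact (hdiag.mul (hq.inv.pow_of_coprime 4 hcop).isUnit_vandermonde).mul hdiag

end GaussMatrix

theorem CR_eq_diagonal_mul_gaussMatrix_mul_diagonal {N : ℕ} {q u v u' v' h : ℂ}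
    (ha : u' * v' / (u * h) ≠ 0) :
    CR N q u v u' v' h =
      diagonal (fun i : Fin N => (v' / v) ^ (i : ℕ) *
        (∏ α ∈ Finset.range i, ((1 + q ^ (4 * α + 1) * u) * (1 + q ^ (4 * α + 3) * u))⁻¹) *
        (u' * v' / (u * h)) ^ (-(i : ℤ))) *
      gaussMatrix N q * diagonal (fun j : Fin N => (u' * v' / (u * h)) ^ (j : ℤ)) := by
  ext i j
  simp only [CR, gaussMatrix, of_apply, mul_diagonal, diagonal_mul, zpow_sub₀ ha,
    _root_.zpow_neg]
  ring

theorem stmt9_general (N : ℕ) (hN : Odd N) (q : ℂ) (hq : IsPrimitiveRoot q N)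
    (u v h u' v' : ℂ) (hu : u ≠ 0) (hv : v ≠ 0) (hh : h ≠ 0)
    (hu' : u' ≠ 0) (hv' : v' ≠ 0) (hun : u ^ N ≠ -1) :
    IsUnit (CR N q u v u' v' h) := by
  have ha : u' * v' / (u * h) ≠ 0 := by positivity
  have hfactor := one_add_pow_mul_ne_zero hN hq.pow_eq_one hun
  rw [CR_eq_diagonal_mul_gaussMatrix_mul_diagonal ha]
  refine ((isUnit_diagonal.2 (Pi.isUnit_iff.2 fun i => ?_)).mul
    (hq.isUnit_gaussMatrix hN)).mul (isUnit_diagonal.2 (Pi.isUnit_iff.2 fun j => ?_))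
  · refine (mul_ne_zero (mul_ne_zero (by positivity) ?_) (by positivity)).isUnit
    exact Finset.prod_ne_zero_iff.2 fun α _ => inv_ne_zero (mul_ne_zero (hfactor _) (hfactor _))
  · exact (zpow_ne_zero _ ha).isUnit

/-- The matrix `C_R` is invertible. -/
theorem stmt9 (N : ℕ) (hN : Odd N) (hNpos : 0 < N) (q : ℂ) (hq : IsPrimitiveRoot q N)
    (u v h u' v' : ℂ) (hu : u ≠ 0) (hv : v ≠ 0) (hh : h ≠ 0)
    (hu' : u' ≠ 0) (hv' : v' ≠ 0) (hun : u ^ N ≠ -1)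
    (hu'N : u' ^ N = h ^ N / (u ^ N * v ^ N * (1 + (u ^ N)⁻¹) ^ 2))
    (hv'N : v' ^ N = (1 + u ^ N) ^ 2 * v ^ N) :
    IsUnit (CR N q u v u' v' h) :=
  stmt9_general N hN q hq u v h u' v' hu hv hh hu' hv' hun
end
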